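/- arXiv:1407.8517 — 9 statements merged into one kernel-verified Lean document; each statement's English description precedes it below -/
import Mathlib

section
/- Let X be a pure n-dimensional weighted simplicial complex. For every 0 ≤ k ≤ n and every φ, ψ ∈ C^k(X,ℝ): (k+1)! ⟨φ,ψ⟩ = Σ_{τ ∈ Σ(k-1)} ⟨φ_τ, ψ_τ⟩, where φ_τ ∈ C^0(X_τ,ℝ) is the localization φ_τ(σ) = φ(τσ) and the inner products on links use the induced weights m_τ. -/
open Finset

open scoped Classical

/-- `X` is (the face set of) an abstract simplicial complex: downward closed. -/
def IsSC {V : Type*} [DecidableEq V] (X : Finset (Finset V)) : Prop :=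
  ∀ s ∈ X, ∀ t ⊆ s, t ∈ X

/-- `X` is pure `n`-dimensional: every face is contained in a face of cardinality `n+1`. -/
def IsPure {V : Type*} [DecidableEq V] (X : Finset (Finset V)) (n : ℕ) : Prop :=
  ∀ s ∈ X, ∃ t ∈ X, s ⊆ t ∧ t.card = n + 1

/-- A weight function on a pure `n`-dimensional complex `X`. -/
def IsWeight {V : Type*} [DecidableEq V] (X : Finset (Finset V)) (n : ℕ) (m : Finset V → ℝ) :
    Prop :=
  (∀ s ∈ X, 0 < m s) ∧
  ∀ s ∈ X, s.card ≤ n →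
    m s = ∑ t ∈ X.filter (fun t => s ⊆ t ∧ t.card = s.card + 1), m t

/-- An ordered simplex of `X` with `a` vertices (an ordered `(a-1)`-simplex, element of
`Σ(a-1)`): an injective tuple whose image is a face of `X`. -/
def OSimp {V : Type*} [Fintype V] [DecidableEq V] (X : Finset (Finset V)) {a : ℕ}
    (f : Fin a → V) : Prop :=
  Function.Injective f ∧ Finset.image f Finset.univ ∈ X

/-- A `(a-1)`-form: an antisymmetric real function on ordered tuples. -/
def IsForm {V : Type*} {a : ℕ} (φ : (Fin a → V) → ℝ) : Prop :=
  ∀ (f : Fin a → V) (π : Equiv.Perm (Fin a)),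
    φ (f ∘ π) = ((Equiv.Perm.sign π : ℤ) : ℝ) * φ f

/-- The weighted inner product `⟨φ,ψ⟩ = Σ_{f ∈ Σ(a-1)} (m(f)/a!) φ(f) ψ(f)` on
`(a-1)`-forms. -/
noncomputable def formIP {V : Type*} [Fintype V] [DecidableEq V] (X : Finset (Finset V))
    (m : Finset V → ℝ) {a : ℕ} (φ ψ : (Fin a → V) → ℝ) : ℝ :=
  ∑ f : Fin a → V,
    if OSimp X f then (m (Finset.image f Finset.univ) / (Nat.factorial a : ℝ)) * (φ f * ψ f)
    else 0

/-- The simplicial differential `d : C^{a-1} → C^a`. -/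
def dOp {V : Type*} {a : ℕ} (φ : (Fin a → V) → ℝ) : (Fin (a + 1) → V) → ℝ :=
  fun f => ∑ i : Fin (a + 1), (-1 : ℝ) ^ (i : ℕ) * φ (fun j => f (i.succAbove j))

/-- The codifferential `δ : C^a → C^{a-1}`, given by
`(δφ)(τ) = Σ_{v : vτ ∈ Σ(a)} (m(vτ)/m(τ)) φ(vτ)`. -/
noncomputable def deltaOp {V : Type*} [Fintype V] [DecidableEq V] (X : Finset (Finset V))
    (m : Finset V → ℝ) {a : ℕ} (φ : (Fin (a + 1) → V) → ℝ) : (Fin a → V) → ℝ :=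
  fun τ => ∑ v : V,
    if OSimp X (Fin.cons v τ : Fin (a + 1) → V) then
      (m (Finset.image (Fin.cons v τ : Fin (a + 1) → V) Finset.univ) /
        m (Finset.image τ Finset.univ)) * φ (Fin.cons v τ)
    else 0

/-- The vertices of the link of the face `τ`. -/
def linkVerts {V : Type*} [Fintype V] [DecidableEq V] (X : Finset (Finset V)) (τ : Finset V) :
    Finset V :=
  Finset.univ.filter (fun v => v ∉ τ ∧ insert v τ ∈ X)

/-- The upper `0`-Laplacian `Δ⁺_{τ,0}` of the link of the face `τ`, with the induced weight
`m_τ(σ) = m(τ ∪ σ)`:  `Δ⁺φ(u) = φ(u) - Σ_{v : {u,v} ∈ X_τ} (m_τ({u,v})/m_τ({u})) φ(v)`. -/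
noncomputable def linkLap {V : Type*} [Fintype V] [DecidableEq V] (X : Finset (Finset V))
    (m : Finset V → ℝ) (τ : Finset V) (φ : V → ℝ) : V → ℝ :=
  fun u => φ u -
    ∑ v ∈ Finset.univ.filter (fun v => v ∉ insert u τ ∧ insert v (insert u τ) ∈ X),
      (m (insert v (insert u τ)) / m (insert u τ)) * φ v

/-- `μ` is an eigenvalue of the upper `0`-Laplacian of the link of `τ`. -/
def linkEig {V : Type*} [Fintype V] [DecidableEq V] (X : Finset (Finset V)) (m : Finset V → ℝ)
    (τ : Finset V) (μ : ℝ) : Prop :=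
  ∃ φ : V → ℝ, (∀ v, v ∉ linkVerts X τ → φ v = 0) ∧ (∃ u ∈ linkVerts X τ, φ u ≠ 0) ∧
    ∀ u ∈ linkVerts X τ, linkLap X m τ φ u = μ * φ u

/-- The link of the face `τ` is a connected: any two of its vertices are joined by a path of
edges of the link. -/
def linkConn {V : Type*} [Fintype V] [DecidableEq V] (X : Finset (Finset V)) (τ : Finset V) :
    Prop :=
  ∀ u ∈ linkVerts X τ, ∀ v ∈ linkVerts X τ,
    Relation.ReflTransGen
      (fun a b => a ∈ linkVerts X τ ∧ b ∈ linkVerts X τ ∧ a ≠ b ∧ insert a (insert b τ) ∈ X)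
      u v

lemma osimp_of_snoc {V : Type*} [Fintype V] [DecidableEq V] {X : Finset (Finset V)}
    (hSC : IsSC X) {k : ℕ} {τ : Fin k → V} {v : V}
    (h : OSimp X (Fin.snoc τ v : Fin (k + 1) → V)) : OSimp X τ := by
  obtain ⟨hinj, hmem⟩ := h
  constructor
  · have : τ = fun j => (Fin.snoc τ v : Fin (k+1) → V) (Fin.castSucc j) := by
      funext j; simp
    rw [this]
    exact hinj.comp (Fin.castSucc_injective k)
  · apply hSC _ hmem
    intro x hx
    simp only [Finset.mem_image, Finset.mem_univ, true_and] at hx ⊢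
    obtain ⟨j, rfl⟩ := hx
    exact ⟨Fin.castSucc j, by simp⟩

/-- Let `X` be a pure `n`-dimensional weighted simplicial complex.  For every
`0 ≤ k ≤ n` and all `k`-forms `φ, ψ ∈ C^k(X,ℝ)`,
`(k+1)! ⟨φ,ψ⟩ = Σ_{τ ∈ Σ(k-1)} ⟨φ_τ, ψ_τ⟩`, where the localization `φ_τ ∈ C^0(X_τ,ℝ)` is
`φ_τ(v) = φ(τv)` and the inner product on the link `X_τ` uses the induced weight
`m_τ(v) = m(τv)` (so `⟨φ_τ,ψ_τ⟩ = Σ_{v : τv ∈ Σ(k)} m(τv) φ(τv) ψ(τv)`). -/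
theorem stmt6 {V : Type*} [Fintype V] [DecidableEq V] (n : ℕ)
    (X : Finset (Finset V)) (hSC : IsSC X) (hpure : IsPure X n)
    (m : Finset V → ℝ) (hm : IsWeight X n m)
    (k : ℕ) (hk : k ≤ n)
    (φ ψ : (Fin (k + 1) → V) → ℝ) (hφ : IsForm φ) (hψ : IsForm ψ) :
    (Nat.factorial (k + 1) : ℝ) * formIP X m φ ψ =
      ∑ τ : Fin k → V,
        if OSimp X τ then
          ∑ v : V,
            if OSimp X (Fin.snoc τ v : Fin (k + 1) → V) then
              m (Finset.image (Fin.snoc τ v : Fin (k + 1) → V) Finset.univ) *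
                (φ (Fin.snoc τ v) * ψ (Fin.snoc τ v))
            else 0
        else 0 := by
  have hfac : (Nat.factorial (k + 1) : ℝ) ≠ 0 := by positivity
  have hL : (Nat.factorial (k + 1) : ℝ) * formIP X m φ ψ =
      ∑ f : Fin (k+1) → V, if OSimp X f then
        m (Finset.image f Finset.univ) * (φ f * ψ f) else 0 := by
    rw [formIP, Finset.mul_sum]
    refine Finset.sum_congr rfl fun f _ => ?_
    rw [mul_ite, mul_zero]
    congr 1
    field_simp
  rw [hL]
  have hR : ∀ τ : Fin k → V,
      (if OSimp X τ then
          ∑ v : V,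
            if OSimp X (Fin.snoc τ v : Fin (k + 1) → V) then
              m (Finset.image (Fin.snoc τ v : Fin (k + 1) → V) Finset.univ) *
                (φ (Fin.snoc τ v) * ψ (Fin.snoc τ v))
            else 0
        else 0) =
      ∑ v : V,
            if OSimp X (Fin.snoc τ v : Fin (k + 1) → V) then
              m (Finset.image (Fin.snoc τ v : Fin (k + 1) → V) Finset.univ) *
                (φ (Fin.snoc τ v) * ψ (Fin.snoc τ v))
            else 0 := by
    intro τ
    by_cases hτ : OSimp X τ
    · rw [if_pos hτ]
    · rw [if_neg hτ]
      symm
      refine Finset.sum_eq_zero fun v _ => ?_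
      rw [if_neg (fun h => hτ (osimp_of_snoc hSC h))]
  simp only [hR]
  rw [← Finset.sum_product']
  let e : (Fin k → V) × V ≃ (Fin (k+1) → V) :=
    { toFun := fun p => Fin.snoc p.1 p.2
      invFun := fun f => (Fin.init f, f (Fin.last k))
      left_inv := fun p => by simp
      right_inv := fun f => by simp }
  rw [Finset.univ_product_univ]
  exact (Fintype.sum_equiv e _ _ (fun p => rfl)).symm
end

section
/- Let X be a pure n-dimensional weighted simplicial complex (n > 1) whose links are connected. For 0 ≤ k ≤ n-1, if φ ∈ C^k(X,ℝ) and 0 ≤ l ≤ n-k-1, then ⟨φ,ψ⟩ = Σ_{τ ∈ Σ(l)} ⟨φ^τ, ψ^τ⟩, where φ^τ ∈ C^k(X_τ,ℝ) is the restriction of φ to the link X_τ, with the inner product on each link induced by the weight m_τ. -/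
open Finset

open scoped Classical

/-- An ordered simplex of the link `X_τ` of the ordered simplex `τ`. -/
def LinkOSimp {V : Type*} [Fintype V] [DecidableEq V] (X : Finset (Finset V)) {j a : ℕ}
    (τ : Fin j → V) (σ : Fin a → V) : Prop :=
  Function.Injective σ ∧ Disjoint (Finset.image σ Finset.univ) (Finset.image τ Finset.univ) ∧
    Finset.image τ Finset.univ ∪ Finset.image σ Finset.univ ∈ X

theorem aux_image_cons {V : Type*} [Fintype V] [DecidableEq V] {j : ℕ} (v : V) (τ : Fin j → V) :
    Finset.image (Fin.cons v τ : Fin (j+1) → V) Finset.univ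
      = insert v (Finset.image τ Finset.univ) := by
  ext x
  simp only [Finset.mem_image, Finset.mem_univ, true_and, Finset.mem_insert]
  constructor
  · rintro ⟨i, rfl⟩
    rcases Fin.eq_zero_or_eq_succ i with rfl | ⟨i', rfl⟩
    · exact Or.inl rfl
    · exact Or.inr ⟨i', by simp⟩
  · rintro (rfl | ⟨i, rfl⟩)
    · exact ⟨0, rfl⟩
    · exact ⟨i.succ, by simp⟩

theorem aux_one_step {V : Type*} [Fintype V] [DecidableEq V] (n : ℕ) (X : Finset (Finset V))
    (m : Finset V → ℝ)
    (hm : ∀ s ∈ X, s.card ≤ n → m s = ∑ t ∈ X.filter (fun t => s ⊆ t ∧ t.card = s.card + 1), m t)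
    (s : Finset V) (hs : s ∈ X) (hsc : s.card ≤ n) :
    m s = ∑ v ∈ Finset.univ.filter (fun v => v ∉ s ∧ insert v s ∈ X), m (insert v s) := by
  rw [hm s hs hsc]
  refine (Finset.sum_bij (fun v _ => insert v s) ?_ ?_ ?_ ?_).symm
  · intro v hv
    simp only [Finset.mem_filter, Finset.mem_univ, true_and] at hv
    simp only [Finset.mem_filter]
    exact ⟨hv.2, Finset.subset_insert _ _, Finset.card_insert_of_notMem hv.1⟩
  · intro v hv w hw h
    simp only [Finset.mem_filter, Finset.mem_univ, true_and] at hv hw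
    have h' : insert v s = insert w s := h
    have : v ∈ insert w s := h' ▸ Finset.mem_insert_self v s
    rcases Finset.mem_insert.1 this with rfl | hmem
    · rfl
    · exact absurd hmem hv.1
  · intro t ht
    simp only [Finset.mem_filter] at ht
    obtain ⟨htX, hst, hcard⟩ := ht
    have h1 : (t \ s).card = 1 := by
      rw [Finset.card_sdiff_of_subset hst, hcard]; omega
    obtain ⟨v, hv⟩ := Finset.card_eq_one.1 h1
    have hvt : v ∈ t \ s := hv ▸ Finset.mem_singleton_self v
    have hvns : v ∉ s := (Finset.mem_sdiff.1 hvt).2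
    have : insert v s = t := by
      apply Finset.eq_of_subset_of_card_le
      · exact Finset.insert_subset (Finset.mem_sdiff.1 hvt).1 hst
      · rw [hcard, Finset.card_insert_of_notMem hvns]
    refine ⟨v, Finset.mem_filter.2 ⟨Finset.mem_univ v, hvns, this ▸ htX⟩, this⟩
  · intro v hv; rfl

theorem aux_sum_weight {V : Type*} [Fintype V] [DecidableEq V] (n : ℕ) (X : Finset (Finset V))
    (hSC : IsSC X) (m : Finset V → ℝ)
    (hm : ∀ s ∈ X, s.card ≤ n → m s = ∑ t ∈ X.filter (fun t => s ⊆ t ∧ t.card = s.card + 1), m t) :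
    ∀ (j : ℕ) (s : Finset V), s ∈ X → s.card + j ≤ n + 1 →
      (∑ τ : Fin j → V,
        if Function.Injective τ ∧ Disjoint (Finset.image τ Finset.univ) s ∧
            Finset.image τ Finset.univ ∪ s ∈ X then
          m (Finset.image τ Finset.univ ∪ s)
        else 0) = m s := by
  intro j
  induction j with
  | zero =>
    intro s hs _
    rw [Fintype.sum_unique]
    have himg : Finset.image (default : Fin 0 → V) Finset.univ = ∅ := by simp
    rw [himg]
    rw [if_pos ⟨Function.injective_of_subsingleton _, Finset.disjoint_empty_left s,
      by simpa using hs⟩]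
    simp
  | succ j ih =>
    intro s hs hcard
    rw [← (Fin.consEquiv (fun _ : Fin (j+1) => V)).sum_comp, Fintype.sum_prod_type]
    have hinner : ∀ v : V,
        (∑ τ' : Fin j → V,
          if Function.Injective ((Fin.consEquiv fun _ => V) (v, τ')) ∧
              Disjoint (Finset.image ((Fin.consEquiv fun _ => V) (v, τ')) Finset.univ) s ∧
              Finset.image ((Fin.consEquiv fun _ => V) (v, τ')) Finset.univ ∪ s ∈ X then
            m (Finset.image ((Fin.consEquiv fun _ => V) (v, τ')) Finset.univ ∪ s)
          else 0)
        = if v ∉ s ∧ insert v s ∈ X then m (insert v s) else 0 := by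
      intro v
      have hce : ∀ τ' : Fin j → V,
          ((Fin.consEquiv fun _ => V) (v, τ') : Fin (j+1) → V) = Fin.cons v τ' := fun _ => rfl
      by_cases hv : v ∉ s ∧ insert v s ∈ X
      · rw [if_pos hv, ← ih (insert v s) hv.2 (by
          rw [Finset.card_insert_of_notMem hv.1]; omega)]
        refine Finset.sum_congr rfl fun τ' _ => ?_
        have himg : Finset.image ((Fin.consEquiv fun _ => V) (v, τ')) Finset.univ
            = insert v (Finset.image τ' Finset.univ) := by
          rw [hce]; exact aux_image_cons v τ'
        have hset : insert v (Finset.image τ' Finset.univ) ∪ s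
            = Finset.image τ' Finset.univ ∪ insert v s := by
          rw [Finset.insert_union, Finset.union_insert]
        rw [himg, hset, hce]
        refine if_congr ?_ rfl rfl
        rw [Fin.cons_injective_iff, Finset.disjoint_insert_left,
          Finset.disjoint_insert_right]
        have hr : v ∈ Set.range τ' ↔ v ∈ Finset.image τ' Finset.univ := by
          simp [Set.mem_range]
        constructor
        · rintro ⟨⟨hvr, hinj⟩, ⟨_, hd⟩, hX⟩
          exact ⟨hinj, ⟨fun h => hvr (hr.2 h), hd⟩, hX⟩
        · rintro ⟨hinj, ⟨hvi, hd⟩, hX⟩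
          exact ⟨⟨fun h => hvi (hr.1 h), hinj⟩, ⟨hv.1, hd⟩, hX⟩
      · rw [if_neg hv]
        refine Finset.sum_eq_zero fun τ' _ => ?_
        rw [if_neg]
        rintro ⟨hinj, hdisj, hX⟩
        have himg : Finset.image ((Fin.consEquiv fun _ => V) (v, τ')) Finset.univ
            = insert v (Finset.image τ' Finset.univ) := by
          rw [hce]; exact aux_image_cons v τ'
        rw [himg] at hdisj hX
        have hvns : v ∉ s := Finset.disjoint_left.1 hdisj (Finset.mem_insert_self _ _)
        have hins : insert v s ∈ X := by
          refine hSC _ hX _ ?_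
          intro x hx
          rcases Finset.mem_insert.1 hx with rfl | hx
          · exact Finset.mem_union_left _ (Finset.mem_insert_self _ _)
          · exact Finset.mem_union_right _ hx
        exact hv ⟨hvns, hins⟩
    calc (∑ v : V, ∑ τ' : Fin j → V, _)
        = ∑ v : V, if v ∉ s ∧ insert v s ∈ X then m (insert v s) else 0 :=
          Finset.sum_congr rfl fun v _ => hinner v
      _ = ∑ v ∈ Finset.univ.filter (fun v => v ∉ s ∧ insert v s ∈ X), m (insert v s) := by
          rw [Finset.sum_filter]
      _ = m s := (aux_one_step n X m hm s hs (by omega)).symm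

/-- Let `X` be a pure `n`-dimensional weighted simplicial complex, `n > 1`,
with connected links.  For `0 ≤ k ≤ n-1`, `k`-forms `φ, ψ ∈ C^k(X,ℝ)` and `0 ≤ l ≤ n-k-1`:
`⟨φ,ψ⟩ = Σ_{τ ∈ Σ(l)} ⟨φ^τ, ψ^τ⟩`, where `φ^τ ∈ C^k(X_τ,ℝ)` is the restriction
`φ^τ(σ) = φ(σ)` and the inner product on the link `X_τ` uses the induced weight
`m_τ(σ) = m(τσ)`. -/
theorem stmt8 {V : Type*} [Fintype V] [DecidableEq V] (n : ℕ) (hn : 1 < n)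
    (X : Finset (Finset V)) (hSC : IsSC X) (hpure : IsPure X n)
    (hconn : ∀ s ∈ X, s.card + 1 ≤ n → linkConn X s)
    (m : Finset V → ℝ) (hm : IsWeight X n m)
    (k l : ℕ) (hk : k + 1 ≤ n) (hl : l + k + 1 ≤ n)
    (φ ψ : (Fin (k + 1) → V) → ℝ) (hφ : IsForm φ) (hψ : IsForm ψ) :
    formIP X m φ ψ =
      ∑ τ : Fin (l + 1) → V,
        if OSimp X τ then
          ∑ σ : Fin (k + 1) → V,
            if LinkOSimp X τ σ then
              (m (Finset.image τ Finset.univ ∪ Finset.image σ Finset.univ) /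
                  (Nat.factorial (k + 1) : ℝ)) * (φ σ * ψ σ)
            else 0
        else 0 := by
  have step1 : ∀ τ : Fin (l + 1) → V,
      (if OSimp X τ then
        ∑ σ : Fin (k + 1) → V,
          if LinkOSimp X τ σ then
            (m (Finset.image τ Finset.univ ∪ Finset.image σ Finset.univ) /
                (Nat.factorial (k + 1) : ℝ)) * (φ σ * ψ σ)
          else 0
      else 0)
      = ∑ σ : Fin (k + 1) → V,
          if Function.Injective τ ∧ LinkOSimp X τ σ then
            (m (Finset.image τ Finset.univ ∪ Finset.image σ Finset.univ) /
                (Nat.factorial (k + 1) : ℝ)) * (φ σ * ψ σ)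
          else 0 := by
    intro τ
    by_cases h : OSimp X τ
    · rw [if_pos h]
      refine Finset.sum_congr rfl fun σ _ => ?_
      refine if_congr ?_ rfl rfl
      exact ⟨fun hl' => ⟨h.1, hl'⟩, fun hl' => hl'.2⟩
    · rw [if_neg h]
      refine (Finset.sum_eq_zero fun σ _ => ?_).symm
      rw [if_neg]
      rintro ⟨hinj, _, _, hmem⟩
      exact h ⟨hinj, hSC _ hmem _ Finset.subset_union_left⟩
  rw [Finset.sum_congr rfl fun τ _ => step1 τ, Finset.sum_comm]
  have step2 : ∀ σ : Fin (k + 1) → V,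
      (∑ τ : Fin (l + 1) → V,
        if Function.Injective τ ∧ LinkOSimp X τ σ then
          (m (Finset.image τ Finset.univ ∪ Finset.image σ Finset.univ) /
              (Nat.factorial (k + 1) : ℝ)) * (φ σ * ψ σ)
        else 0)
      = if OSimp X σ then
          (m (Finset.image σ Finset.univ) / (Nat.factorial (k + 1) : ℝ)) * (φ σ * ψ σ)
        else 0 := by
    intro σ
    by_cases hσ : OSimp X σ
    · rw [if_pos hσ]
      have hcardσ : (Finset.image σ Finset.univ).card = k + 1 := by
        rw [Finset.card_image_of_injective _ hσ.1, Finset.card_univ, Fintype.card_fin]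
      have haux := aux_sum_weight n X hSC m hm.2 (l + 1) (Finset.image σ Finset.univ) hσ.2
        (by omega)
      calc (∑ τ : Fin (l + 1) → V,
            if Function.Injective τ ∧ LinkOSimp X τ σ then
              (m (Finset.image τ Finset.univ ∪ Finset.image σ Finset.univ) /
                  (Nat.factorial (k + 1) : ℝ)) * (φ σ * ψ σ)
            else 0)
          = (∑ τ : Fin (l + 1) → V,
              if Function.Injective τ ∧
                  Disjoint (Finset.image τ Finset.univ) (Finset.image σ Finset.univ) ∧
                  Finset.image τ Finset.univ ∪ Finset.image σ Finset.univ ∈ X then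
                m (Finset.image τ Finset.univ ∪ Finset.image σ Finset.univ)
              else 0) * (φ σ * ψ σ / (Nat.factorial (k + 1) : ℝ)) := by
            rw [Finset.sum_mul]
            refine Finset.sum_congr rfl fun τ _ => ?_
            by_cases hc : Function.Injective τ ∧
                Disjoint (Finset.image τ Finset.univ) (Finset.image σ Finset.univ) ∧
                Finset.image τ Finset.univ ∪ Finset.image σ Finset.univ ∈ X
            · rw [if_pos hc, if_pos ⟨hc.1, hσ.1, hc.2.1.symm, hc.2.2⟩]
              ring
            · rw [if_neg hc, if_neg, zero_mul]
              rintro ⟨h1, _, h3, h4⟩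
              exact hc ⟨h1, h3.symm, h4⟩
        _ = m (Finset.image σ Finset.univ) * (φ σ * ψ σ / (Nat.factorial (k + 1) : ℝ)) := by
            rw [haux]
        _ = (m (Finset.image σ Finset.univ) / (Nat.factorial (k + 1) : ℝ)) * (φ σ * ψ σ) := by
            ring
    · rw [if_neg hσ]
      refine Finset.sum_eq_zero fun τ _ => ?_
      rw [if_neg]
      rintro ⟨_, hiσ, _, hmem⟩
      exact hσ ⟨hiσ, hSC _ hmem _ Finset.subset_union_right⟩
  rw [Finset.sum_congr rfl fun σ _ => step2 σ]
  rfl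
end

section
/- Let X be a pure n-dimensional connected simplicial complex such that all links of dimension > 0 are connected. Then X is gallery connected: for every two vertices u, v, there is a sequence σ_0, …, σ_l of n-dimensional simplices with u ∈ σ_0, v ∈ σ_l, and σ_i ∩ σ_{i+1} an (n-1)-simplex for each i. -/
open Finset

open scoped Classical

/-- Adjacency of top simplices. -/
def GalR {V : Type*} [DecidableEq V] (X : Finset (Finset V)) (n : ℕ)
    (a b : Finset V) : Prop :=
  (a ∈ X ∧ a.card = n + 1) ∧ (b ∈ X ∧ b.card = n + 1) ∧ (a ∩ b).card = n

lemma chain_of_rtg {V : Type*} [DecidableEq V] (n : ℕ) (X : Finset (Finset V))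
    (σ τ : Finset V) (hσ : σ ∈ X ∧ σ.card = n + 1)
    (h : Relation.ReflTransGen (GalR X n) σ τ) :
    ∃ (l : ℕ) (f : Fin (l + 1) → Finset V), (∀ i, f i ∈ X ∧ (f i).card = n + 1) ∧
      f 0 = σ ∧ f (Fin.last l) = τ ∧ ∀ i : Fin l, (f i.castSucc ∩ f i.succ).card = n := by
  induction h with
  | refl => exact ⟨0, fun _ => σ, fun _ => hσ, rfl, rfl, fun i => i.elim0⟩
  | @tail b c hab hbc ih =>
    obtain ⟨l, f, htop, h0, hl, hadj⟩ := ih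
    refine ⟨l + 1, Fin.snoc f c, ?_, ?_, ?_, ?_⟩
    · intro i
      refine Fin.lastCases ?_ (fun j => ?_) i
      · rw [Fin.snoc_last]; exact hbc.2.1
      · rw [Fin.snoc_castSucc]; exact htop j
    · have : (0 : Fin (l + 2)) = Fin.castSucc 0 := rfl
      rw [this, Fin.snoc_castSucc, h0]
    · rw [Fin.snoc_last]
    · intro i
      refine Fin.lastCases ?_ (fun j => ?_) i
      · rw [Fin.succ_last, Fin.snoc_last, Fin.snoc_castSucc, hl]
        exact hbc.2.2
      · rw [Fin.succ_castSucc, Fin.snoc_castSucc, Fin.snoc_castSucc]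
        exact hadj j

lemma key_lemma {V : Type*} [Fintype V] [DecidableEq V] (n : ℕ) (X : Finset (Finset V))
    (hSC : IsSC X) (hpure : IsPure X n)
    (hconn : ∀ s ∈ X, s.card + 1 ≤ n → linkConn X s) :
    ∀ d : ℕ, ∀ τ ∈ X, n + 1 ≤ τ.card + d → ∀ σ σ', σ ∈ X → σ.card = n + 1 →
      σ' ∈ X → σ'.card = n + 1 → τ ⊆ σ → τ ⊆ σ' →
      Relation.ReflTransGen (GalR X n) σ σ' := by
  intro d
  induction d with
  | zero =>
    intro τ hτ hcard σ σ' hσ hσc hσ' hσ'c hτσ hτσ'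
    have h1 : τ = σ := Finset.eq_of_subset_of_card_le hτσ (by omega)
    have h2 : τ = σ' := Finset.eq_of_subset_of_card_le hτσ' (by omega)
    rw [← h1, ← h2]
  | succ d ih =>
    intro τ hτ hcard σ σ' hσ hσc hσ' hσ'c hτσ hτσ'
    by_cases hd : n + 1 ≤ τ.card + d
    · exact ih τ hτ hd σ σ' hσ hσc hσ' hσ'c hτσ hτσ'
    by_cases hn' : n ≤ τ.card
    · -- τ.card = n
      have hτn : τ.card = n := by
        have := Finset.card_le_card hτσ
        omega
      by_cases heq : σ = σ'
      · rw [heq]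
      · refine Relation.ReflTransGen.single ⟨⟨hσ, hσc⟩, ⟨hσ', hσ'c⟩, ?_⟩
        have hsub : τ ⊆ σ ∩ σ' := Finset.subset_inter hτσ hτσ'
        have hlb : n ≤ (σ ∩ σ').card := hτn ▸ Finset.card_le_card hsub
        have hub : (σ ∩ σ').card ≤ n + 1 := hσc ▸ Finset.card_le_card inter_subset_left
        rcases Nat.lt_or_ge (σ ∩ σ').card (n + 1) with h | h
        · omega
        · exfalso
          have h1 : σ ∩ σ' = σ := Finset.eq_of_subset_of_card_le inter_subset_left (by omega)
          have h2 : σ ∩ σ' = σ' := Finset.eq_of_subset_of_card_le inter_subset_right (by omega)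
          exact heq (h1 ▸ h2)
    · -- τ.card + 1 ≤ n : use link connectivity
      have hlink := hconn τ hτ (by omega)
      have hss : τ ⊂ σ := hτσ.ssubset_of_ne (by
        intro h; rw [h] at hn'; omega)
      obtain ⟨a, haσ, haτ⟩ := Finset.exists_of_ssubset hss
      have hss' : τ ⊂ σ' := hτσ'.ssubset_of_ne (by
        intro h; rw [h] at hn'; omega)
      obtain ⟨b, hbσ', hbτ⟩ := Finset.exists_of_ssubset hss'
      have haL : a ∈ linkVerts X τ := by
        simp only [linkVerts, Finset.mem_filter, Finset.mem_univ, true_and]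
        exact ⟨haτ, hSC σ hσ _ (Finset.insert_subset haσ hτσ)⟩
      have hbL : b ∈ linkVerts X τ := by
        simp only [linkVerts, Finset.mem_filter, Finset.mem_univ, true_and]
        exact ⟨hbτ, hSC σ' hσ' _ (Finset.insert_subset hbσ' hτσ')⟩
      have hpath := hlink a haL b hbL
      suffices H : ∀ b', Relation.ReflTransGen
          (fun x y => x ∈ linkVerts X τ ∧ y ∈ linkVerts X τ ∧ x ≠ y ∧
            insert x (insert y τ) ∈ X) a b' →
          ∀ ρ, ρ ∈ X → ρ.card = n + 1 → insert b' τ ⊆ ρ →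
          Relation.ReflTransGen (GalR X n) σ ρ by
        exact H b hpath σ' hσ' hσ'c (Finset.insert_subset hbσ' hτσ')
      intro b' hp
      induction hp with
      | refl =>
        intro ρ hρ hρc hsub
        have hmem : insert a τ ∈ X := hSC σ hσ _ (Finset.insert_subset haσ hτσ)
        have hcard' : n + 1 ≤ (insert a τ).card + d := by
          rw [Finset.card_insert_of_notMem haτ]; omega
        exact ih _ hmem hcard' σ ρ hσ hσc hρ hρc (Finset.insert_subset haσ hτσ) hsub
      | @tail c b' hac hcb ihp =>
        intro ρ hρ hρc hsub
        obtain ⟨hcL, hb'L, hne, hX2⟩ := hcb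
        obtain ⟨ρ', hρ', hsub', hρ'c⟩ := hpure _ hX2
        have hb'τ : b' ∉ τ := by
          simp only [linkVerts, Finset.mem_filter] at hb'L; exact hb'L.2.1
        have h1 : Relation.ReflTransGen (GalR X n) σ ρ' := by
          refine ihp ρ' hρ' hρ'c ?_
          refine Finset.insert_subset (hsub' (Finset.mem_insert_self _ _)) ?_
          exact fun x hx => hsub' (Finset.mem_insert_of_mem (Finset.mem_insert_of_mem hx))
        have hmem : insert b' τ ∈ X := hSC _ hX2 _ (Finset.subset_insert _ _)
        have hcard' : n + 1 ≤ (insert b' τ).card + d := by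
          rw [Finset.card_insert_of_notMem hb'τ]; omega
        have h2 : Relation.ReflTransGen (GalR X n) ρ' ρ :=
          ih _ hmem hcard' ρ' ρ hρ' hρ'c hρ hρc
            (Finset.Subset.trans (Finset.subset_insert _ _) hsub') hsub
        exact h1.trans h2

/-- Let `X` be a pure `n`-dimensional connected simplicial complex (`n ≥ 1`)
such that all its links of dimension `> 0` are connected (the case `τ = ∅` of the hypothesis
being connectivity of `X` itself).  Then `X` is gallery connected: for every two vertices
`u, v` there is a sequence `σ_0, …, σ_l` of `n`-dimensional simplices with `u ∈ σ_0`,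
`v ∈ σ_l`, and `σ_i ∩ σ_{i+1}` an `(n-1)`-simplex for each `i`. -/
theorem stmt9 {V : Type*} [Fintype V] [DecidableEq V] (n : ℕ) (hn : 1 ≤ n)
    (X : Finset (Finset V)) (hSC : IsSC X) (hpure : IsPure X n) (hne : ∅ ∈ X)
    (hconn : ∀ s ∈ X, s.card + 1 ≤ n → linkConn X s) :
    ∀ u v : V, {u} ∈ X → {v} ∈ X →
      ∃ (l : ℕ) (σ : Fin (l + 1) → Finset V),
        (∀ i, σ i ∈ X ∧ (σ i).card = n + 1) ∧
        u ∈ σ 0 ∧ v ∈ σ (Fin.last l) ∧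
        ∀ i : Fin l, (σ i.castSucc ∩ σ i.succ).card = n := by
  intro u v hu hv
  have hlink := hconn ∅ hne (by simpa using hn)
  have huL : u ∈ linkVerts X ∅ := by
    simp only [linkVerts, Finset.mem_filter, Finset.mem_univ, true_and]
    exact ⟨Finset.notMem_empty u, by simpa using hu⟩
  have hvL : v ∈ linkVerts X ∅ := by
    simp only [linkVerts, Finset.mem_filter, Finset.mem_univ, true_and]
    exact ⟨Finset.notMem_empty v, by simpa using hv⟩
  have hpath := hlink u huL v hvL
  suffices H : ∃ σ σ', (σ ∈ X ∧ σ.card = n + 1) ∧ (σ' ∈ X ∧ σ'.card = n + 1) ∧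
      u ∈ σ ∧ v ∈ σ' ∧ Relation.ReflTransGen (GalR X n) σ σ' by
    obtain ⟨σ, σ', hσ, hσ', huσ, hvσ', hrtg⟩ := H
    obtain ⟨l, f, htop, h0, hl, hadj⟩ := chain_of_rtg n X σ σ' hσ hrtg
    exact ⟨l, f, htop, h0 ▸ huσ, hl ▸ hvσ', hadj⟩
  -- induction over the path from u to v
  induction hpath with
  | refl =>
    obtain ⟨σ, hσ, hsub, hσc⟩ := hpure _ hu
    exact ⟨σ, σ, ⟨hσ, hσc⟩, ⟨hσ, hσc⟩, hsub (Finset.mem_singleton_self u),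
      hsub (Finset.mem_singleton_self u), Relation.ReflTransGen.refl⟩
  | @tail c v' hac hcv ihp =>
    obtain ⟨hcL, hv'L, hnecv, hX2⟩ := hcv
    have hv'X : {v'} ∈ X := by
      simp only [linkVerts, Finset.mem_filter] at hv'L
      simpa using hv'L.2.2
    have hX2' : ({c, v'} : Finset V) ∈ X := by simpa using hX2
    have hcX : ({c} : Finset V) ∈ X := by
      refine hSC _ hX2' _ ?_
      simp
    obtain ⟨σ, σ₁, hσ, hσ₁, huσ, hcσ₁, hrtg⟩ := ihp hcX hcL
    obtain ⟨ρ, hρ, hsubρ, hρc⟩ := hpure _ hX2'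
    have h2 : Relation.ReflTransGen (GalR X n) σ₁ ρ := by
      refine key_lemma n X hSC hpure hconn n {c} hcX (by rw [Finset.card_singleton]; omega) σ₁ ρ hσ₁.1 hσ₁.2 hρ hρc
        (Finset.singleton_subset_iff.mpr hcσ₁) ?_
      exact Finset.singleton_subset_iff.mpr (hsubρ (by simp))
    refine ⟨σ, ρ, hσ, ⟨hρ, hρc⟩, huσ, hsubρ (by simp), hrtg.trans h2⟩
end

section
/- Let X be a pure n-dimensional weighted simplicial complex, n > 1, with all links of dimension > 0 connected. Fix 0 ≤ k ≤ n-2 and κ ≥ λ > 0. If for every ordered k-simplex σ the nonzero spectrum of the upper 0-Laplacian Δ^+_{σ,0} on the link X_σ is contained in [λ, κ], then for every ordered (k-1)-simplex τ the nonzero spectrum of Δ^+_{τ,0} on X_τ is contained in [2 - 1/λ, 2 - 1/κ]. -/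
/-!
Garland's method. Let `φ` be an eigenfunction of `Δ⁺` on the link of `τ` with eigenvalue
`μ ≠ 0`. For each vertex `u` of that link, `χ_u = φ - (1 - μ) φ(u)` on the link of `u τ` is
orthogonal to the constants, so the spectral gap of that (connected) link gives
`λ ‖χ_u‖² ≤ ⟨Δ⁺ χ_u, χ_u⟩ ≤ κ ‖χ_u‖²`. Summing over `u`, the weight identities turn
`Σ ‖χ_u‖²` into `μ (2 - μ) ‖φ‖²`, and, since the Dirichlet energies of the links of the `u τ`
add up to that of the link of `τ`, `Σ ⟨Δ⁺ χ_u, χ_u⟩` into `μ ‖φ‖²`. Hence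
`λ (2 - μ) ≤ 1 ≤ κ (2 - μ)`.
-/

open Finset

open scoped Classical

section Link

variable {V : Type*} [Fintype V] [DecidableEq V] {X : Finset (Finset V)} {σ : Finset V}

@[simp]
lemma mem_linkVerts {v : V} : v ∈ linkVerts X σ ↔ v ∉ σ ∧ insert v σ ∈ X := by
  simp [linkVerts]

lemma card_insert_of_mem_linkVerts {u : V} (hu : u ∈ linkVerts X σ) :
    (insert u σ).card = σ.card + 1 :=
  card_insert_of_notMem (mem_linkVerts.1 hu).1

lemma mem_linkVerts_insert_symm (hSC : IsSC X) {u v : V} (hu : u ∈ linkVerts X σ)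
    (hv : v ∈ linkVerts X (insert u σ)) :
    v ∈ linkVerts X σ ∧ u ∈ linkVerts X (insert v σ) := by
  simp only [mem_linkVerts, mem_insert, not_or] at hu hv ⊢
  refine ⟨⟨hv.1.2, hSC _ hv.2 _ ?_⟩, ⟨Ne.symm hv.1.1, hu.1⟩, ?_⟩
  · rw [insert_comm]
    exact subset_insert _ _
  · rw [insert_comm]
    exact hv.2

lemma sum_linkVerts_insert_comm {β : Type*} [AddCommMonoid β] (hSC : IsSC X)
    (F : V → V → β) :
    ∑ u ∈ linkVerts X σ, ∑ v ∈ linkVerts X (insert u σ), F u v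
      = ∑ u ∈ linkVerts X σ, ∑ v ∈ linkVerts X (insert u σ), F v u :=
  sum_comm' fun _ _ =>
    ⟨fun ⟨hu, hv⟩ => (mem_linkVerts_insert_symm hSC hu hv).symm,
     fun ⟨hv, hu⟩ => mem_linkVerts_insert_symm hSC hu hv⟩

lemma sum_linkVerts_insert_rotate {β : Type*} [AddCommMonoid β] (hSC : IsSC X)
    (F : V → V → V → β) :
    ∑ u ∈ linkVerts X σ, ∑ v ∈ linkVerts X (insert u σ),
        ∑ w ∈ linkVerts X (insert v (insert u σ)), F u v w
      = ∑ u ∈ linkVerts X σ, ∑ v ∈ linkVerts X (insert u σ),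
        ∑ w ∈ linkVerts X (insert v (insert u σ)), F w u v := by
  rw [sum_linkVerts_insert_comm hSC]
  refine sum_congr rfl fun u _ => ?_
  rw [← sum_linkVerts_insert_comm hSC]
  exact sum_congr rfl fun v _ => by rw [insert_comm]

end Link

section Weighted

variable {V : Type*} [Fintype V] [DecidableEq V] (X : Finset (Finset V)) (m : Finset V → ℝ)

def IsBalancedAt (s : Finset V) : Prop :=
  m s = ∑ v ∈ linkVerts X s, m (insert v s)

noncomputable def linkInner (σ : Finset V) (f g : V → ℝ) : ℝ :=
  ∑ v ∈ linkVerts X σ, m (insert v σ) * (f v * g v)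

noncomputable def linkEnergy (σ : Finset V) (f : V → ℝ) : ℝ :=
  ∑ u ∈ linkVerts X σ, ∑ v ∈ linkVerts X (insert u σ),
    m (insert v (insert u σ)) * (f u - f v) ^ 2

variable {X m} {σ : Finset V}

lemma IsWeight.isBalancedAt {n : ℕ} (hm : IsWeight X n m) {s : Finset V} (hs : s ∈ X)
    (hcard : s.card ≤ n) : IsBalancedAt X m s := by
  have hcofaces : X.filter (fun t => s ⊆ t ∧ t.card = s.card + 1)
      = (linkVerts X s).image (insert · s) := by
    ext t
    simp only [mem_filter, mem_image, mem_linkVerts]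
    constructor
    · rintro ⟨ht, hst, ht_card⟩
      obtain ⟨v, hv, rfl⟩ := exists_eq_insert_iff.2 ⟨hst, ht_card.symm⟩
      exact ⟨v, ⟨hv, ht⟩, rfl⟩
    · rintro ⟨v, ⟨hv, hvX⟩, rfl⟩
      exact ⟨hvX, subset_insert _ _, card_insert_of_notMem hv⟩
  rw [IsBalancedAt, hm.2 s hs hcard, hcofaces,
    sum_image fun v hv _ _ h => (insert_inj (mem_linkVerts.1 hv).1).1 h]

lemma linkInner_comm (f g : V → ℝ) : linkInner X m σ f g = linkInner X m σ g f := by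
  simp only [linkInner, mul_comm (f _)]

lemma linkInner_self_nonneg (hpos : ∀ s ∈ X, 0 < m s) (f : V → ℝ) :
    0 ≤ linkInner X m σ f f :=
  sum_nonneg fun _ hv => mul_nonneg (hpos _ (mem_linkVerts.1 hv).2).le (mul_self_nonneg _)

lemma linkInner_self_pos (hpos : ∀ s ∈ X, 0 < m s) {f : V → ℝ} {u : V}
    (hu : u ∈ linkVerts X σ) (hfu : f u ≠ 0) : 0 < linkInner X m σ f f :=
  sum_pos' (fun _ hv => mul_nonneg (hpos _ (mem_linkVerts.1 hv).2).le (mul_self_nonneg _))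
    ⟨u, hu, mul_pos (hpos _ (mem_linkVerts.1 hu).2) (mul_self_pos.2 hfu)⟩

lemma mul_linkLap {f : V → ℝ} {u : V} (hu : m (insert u σ) ≠ 0) :
    m (insert u σ) * linkLap X m σ f u
      = m (insert u σ) * f u - linkInner X m (insert u σ) 1 f := by
  simp only [linkLap, linkInner, Pi.one_apply, one_mul, mul_sub, mul_sum]
  congr 1
  exact sum_congr rfl fun v _ => by field_simp

lemma linkInner_linkLap (hpos : ∀ s ∈ X, 0 < m s) (f g : V → ℝ) :
    linkInner X m σ (linkLap X m σ f) g
      = linkInner X m σ f g - ∑ u ∈ linkVerts X σ, ∑ v ∈ linkVerts X (insert u σ),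
          m (insert v (insert u σ)) * (f v * g u) := by
  simp only [linkInner, ← sum_sub_distrib]
  refine sum_congr rfl fun u hu => ?_
  rw [← mul_assoc, mul_linkLap (hpos _ (mem_linkVerts.1 hu).2).ne', linkInner]
  simp only [Pi.one_apply, one_mul, sub_mul, sum_mul, mul_assoc]

lemma linkInner_linkLap_comm (hSC : IsSC X) (hpos : ∀ s ∈ X, 0 < m s) (f g : V → ℝ) :
    linkInner X m σ (linkLap X m σ f) g = linkInner X m σ f (linkLap X m σ g) := by
  rw [linkInner_comm f, linkInner_linkLap hpos, linkInner_linkLap hpos, linkInner_comm g,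
    sum_linkVerts_insert_comm hSC]
  congr 1
  exact sum_congr rfl fun u _ => sum_congr rfl fun v _ => by rw [insert_comm, mul_comm (f u)]

lemma two_mul_linkInner_linkLap_self (hSC : IsSC X) (hpos : ∀ s ∈ X, 0 < m s)
    (hbal : ∀ u ∈ linkVerts X σ, IsBalancedAt X m (insert u σ)) (f : V → ℝ) :
    2 * linkInner X m σ (linkLap X m σ f) f = linkEnergy X m σ f := by
  have hself : linkInner X m σ f f = ∑ u ∈ linkVerts X σ, ∑ v ∈ linkVerts X (insert u σ),
      m (insert v (insert u σ)) * (f u * f u) :=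
    sum_congr rfl fun u hu => by rw [hbal u hu, sum_mul]
  have hself' : linkInner X m σ f f = ∑ u ∈ linkVerts X σ, ∑ v ∈ linkVerts X (insert u σ),
      m (insert v (insert u σ)) * (f v * f v) := by
    rw [hself, sum_linkVerts_insert_comm hSC]
    exact sum_congr rfl fun u _ => sum_congr rfl fun v _ => by rw [insert_comm]
  rw [linkInner_linkLap hpos, mul_sub, two_mul]
  nth_rewrite 1 [hself]
  rw [hself', linkEnergy]
  simp only [← sum_add_distrib, mul_sum, ← sum_sub_distrib]
  exact sum_congr rfl fun u _ => sum_congr rfl fun v _ => by ring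

end Weighted

section Energy

variable {V : Type*} [Fintype V] [DecidableEq V] {X : Finset (Finset V)} {m : Finset V → ℝ}
  {σ : Finset V}

lemma linkEnergy_congr (hSC : IsSC X) {f g : V → ℝ} {c : ℝ}
    (h : ∀ v ∈ linkVerts X σ, f v = g v + c) : linkEnergy X m σ f = linkEnergy X m σ g := by
  refine sum_congr rfl fun u hu => sum_congr rfl fun v hv => ?_
  rw [h u hu, h v (mem_linkVerts_insert_symm hSC hu hv).1]
  ring

lemma sum_linkInner_insert (hSC : IsSC X)
    (hbal : ∀ u ∈ linkVerts X σ, IsBalancedAt X m (insert u σ)) (f g : V → ℝ) :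
    ∑ u ∈ linkVerts X σ, linkInner X m (insert u σ) f g = linkInner X m σ f g := by
  simp only [linkInner]
  rw [sum_linkVerts_insert_comm hSC]
  refine sum_congr rfl fun u hu => ?_
  rw [hbal u hu, sum_mul]
  exact sum_congr rfl fun v _ => by rw [insert_comm]

lemma sum_linkEnergy_insert (hSC : IsSC X)
    (hbal : ∀ u ∈ linkVerts X σ, ∀ v ∈ linkVerts X (insert u σ),
      IsBalancedAt X m (insert v (insert u σ))) (f : V → ℝ) :
    ∑ u ∈ linkVerts X σ, linkEnergy X m (insert u σ) f = linkEnergy X m σ f := by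
  simp only [linkEnergy]
  rw [sum_linkVerts_insert_rotate hSC
    (fun u v w => m (insert w (insert v (insert u σ))) * (f v - f w) ^ 2)]
  refine sum_congr rfl fun u hu => sum_congr rfl fun v hv => ?_
  rw [hbal u hu v hv, sum_mul]
  exact sum_congr rfl fun w _ => by rw [insert_comm u w, insert_comm v w]

lemma eq_of_linkEnergy_eq_zero (hpos : ∀ s ∈ X, 0 < m s) {f : V → ℝ}
    (h : linkEnergy X m σ f = 0) {u v : V} (hu : u ∈ linkVerts X σ)
    (hv : v ∈ linkVerts X (insert u σ)) : f u = f v := by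
  have hterm : ∀ u ∈ linkVerts X σ, ∀ v ∈ linkVerts X (insert u σ),
      0 ≤ m (insert v (insert u σ)) * (f u - f v) ^ 2 := fun _ _ _ hv =>
    mul_nonneg (hpos _ (mem_linkVerts.1 hv).2).le (sq_nonneg _)
  have hu0 := (sum_eq_zero_iff_of_nonneg fun u hu => sum_nonneg (hterm u hu)).1 h u hu
  have huv0 := (sum_eq_zero_iff_of_nonneg (hterm u hu)).1 hu0 v hv
  rw [mul_eq_zero, or_iff_right (hpos _ (mem_linkVerts.1 hv).2).ne', sq_eq_zero_iff,
    sub_eq_zero] at huv0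
  exact huv0

lemma eq_of_linkConn (hconn : linkConn X σ) {f : V → ℝ}
    (hedge : ∀ u ∈ linkVerts X σ, ∀ v ∈ linkVerts X (insert u σ), f u = f v) {u v : V}
    (hu : u ∈ linkVerts X σ) (hv : v ∈ linkVerts X σ) : f u = f v := by
  induction hconn u hu v hv with
  | refl => rfl
  | tail _ hbc ih =>
    obtain ⟨hb, hc, hne, hX⟩ := hbc
    refine (ih hb).trans (hedge _ hb _ (mem_linkVerts.2 ⟨?_, by rwa [insert_comm]⟩))
    simp [Ne.symm hne, (mem_linkVerts.1 hc).1]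

end Energy

open scoped RealInnerProductSpace

lemma LinearMap.IsSymmetric.inner_map_self_mem_Icc {E : Type*} [NormedAddCommGroup E]
    [InnerProductSpace ℝ E] [FiniteDimensional ℝ E] {T : E →ₗ[ℝ] E} (hT : T.IsSymmetric)
    {a b : ℝ} {x : E} (h : ∀ (c : ℝ) (e : E), T e = c • e → ⟪e, x⟫ ≠ 0 → a ≤ c ∧ c ≤ b) :
    ⟪T x, x⟫ ∈ Set.Icc (a * ⟪x, x⟫) (b * ⟪x, x⟫) := by
  set B := hT.eigenvectorBasis rfl
  set μ := hT.eigenvalues rfl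
  have hB (i) : T (B i) = μ i • B i := by
    simpa only [RCLike.ofReal_real_eq_id, id_eq] using hT.apply_eigenvectorBasis rfl i
  have hTx : ⟪T x, x⟫ = ∑ i, μ i * (⟪B i, x⟫ * ⟪B i, x⟫) := by
    rw [← B.sum_inner_mul_inner]
    refine sum_congr rfl fun i _ => ?_
    rw [hT, hB, real_inner_smul_right, real_inner_comm x]
    ring
  have hx : ⟪x, x⟫ = ∑ i, ⟪B i, x⟫ * ⟪B i, x⟫ := by
    rw [← B.sum_inner_mul_inner]
    simp_rw [real_inner_comm x]
  rw [hTx, hx, mul_sum, mul_sum]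
  constructor <;> refine sum_le_sum fun i _ => ?_ <;> by_cases hi : ⟪B i, x⟫ = 0
  · simp [hi]
  · exact mul_le_mul_of_nonneg_right (h _ _ (hB i) hi).1 (mul_self_nonneg _)
  · simp [hi]
  · exact mul_le_mul_of_nonneg_right (h _ _ (hB i) hi).2 (mul_self_nonneg _)

section Symmetrization

variable {V : Type*} [Fintype V] [DecidableEq V] (X : Finset (Finset V)) (m : Finset V → ℝ)
  (σ : Finset V)

noncomputable def toLinkEuclid (f : V → ℝ) : EuclideanSpace ℝ V :=
  WithLp.toLp 2 fun v => (if v ∈ linkVerts X σ then √(m (insert v σ)) else 0) * f v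

noncomputable def ofLinkEuclid (e : EuclideanSpace ℝ V) : V → ℝ :=
  fun v => (if v ∈ linkVerts X σ then (√(m (insert v σ)))⁻¹ else 0) * e v

/-- `Δ⁺` conjugated by the square roots of the vertex weights `m (insert v σ)`: unlike `Δ⁺`
itself, it is symmetric for the standard inner product, so the spectral theorem applies. -/
noncomputable def symLinkLap : EuclideanSpace ℝ V →ₗ[ℝ] EuclideanSpace ℝ V where
  toFun e := toLinkEuclid X m σ (linkLap X m σ (ofLinkEuclid X m σ e))
  map_add' e e' := by
    ext v
    simp only [toLinkEuclid, ofLinkEuclid, linkLap, PiLp.add_apply, mul_add, sum_add_distrib]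
    ring
  map_smul' c e := by
    ext v
    simp only [toLinkEuclid, ofLinkEuclid, linkLap, PiLp.smul_apply, smul_eq_mul,
      RingHom.id_apply, mul_left_comm _ c, ← mul_sum, ← mul_sub]

variable {X m σ}

lemma inner_toLinkEuclid (hpos : ∀ s ∈ X, 0 < m s) (f : V → ℝ) (e : EuclideanSpace ℝ V) :
    ⟪toLinkEuclid X m σ f, e⟫ = linkInner X m σ f (ofLinkEuclid X m σ e) := by
  simp only [toLinkEuclid, ofLinkEuclid, linkInner, PiLp.inner_apply]
  rw [← sum_subset (subset_univ (linkVerts X σ)) fun v _ hv => by simp [hv]]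
  refine sum_congr rfl fun v hv => ?_
  have hm := hpos _ (mem_linkVerts.1 hv).2
  have hsqrt := (Real.sqrt_pos.2 hm).ne'
  simp only [if_pos hv, RCLike.inner_apply, conj_trivial]
  field_simp
  rw [Real.sq_sqrt hm.le]
  ring

lemma ofLinkEuclid_toLinkEuclid (hpos : ∀ s ∈ X, 0 < m s) {f : V → ℝ}
    (hf : ∀ v ∉ linkVerts X σ, f v = 0) : ofLinkEuclid X m σ (toLinkEuclid X m σ f) = f := by
  funext v
  by_cases hv : v ∈ linkVerts X σ
  · have hsqrt := (Real.sqrt_pos.2 (hpos _ (mem_linkVerts.1 hv).2)).ne'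
    simp only [ofLinkEuclid, toLinkEuclid, if_pos hv]
    field_simp
  · simp [ofLinkEuclid, hv, hf v hv]

lemma symLinkLap_isSymmetric (hSC : IsSC X) (hpos : ∀ s ∈ X, 0 < m s) :
    (symLinkLap X m σ).IsSymmetric := fun e e' => by
  change ⟪toLinkEuclid X m σ _, e'⟫ = ⟪e, toLinkEuclid X m σ _⟫
  rw [real_inner_comm _ e, inner_toLinkEuclid hpos, inner_toLinkEuclid hpos,
    linkInner_linkLap_comm hSC hpos, linkInner_comm]

lemma linkLap_ofLinkEuclid_of_eq_smul (hpos : ∀ s ∈ X, 0 < m s) {c : ℝ}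
    {e : EuclideanSpace ℝ V} (he : symLinkLap X m σ e = c • e) {v : V}
    (hv : v ∈ linkVerts X σ) :
    linkLap X m σ (ofLinkEuclid X m σ e) v = c * ofLinkEuclid X m σ e v := by
  have hsqrt := (Real.sqrt_pos.2 (hpos _ (mem_linkVerts.1 hv).2)).ne'
  have hev := congrArg (· v) he
  simp only [symLinkLap, LinearMap.coe_mk, AddHom.coe_mk, toLinkEuclid, PiLp.smul_apply,
    smul_eq_mul, if_pos hv] at hev
  simp only [ofLinkEuclid, if_pos hv] at hev ⊢
  field_simp
  linarith

end Symmetrization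

section Rayleigh

variable {V : Type*} [Fintype V] [DecidableEq V] {X : Finset (Finset V)} {m : Finset V → ℝ}
  {σ : Finset V}

lemma exists_ne_zero_of_linkInner_ne_zero {f g : V → ℝ} (h : linkInner X m σ f g ≠ 0) :
    ∃ v ∈ linkVerts X σ, g v ≠ 0 := by
  obtain ⟨v, hv, hne⟩ := exists_ne_zero_of_sum_ne_zero h
  exact ⟨v, hv, right_ne_zero_of_mul (right_ne_zero_of_mul hne)⟩

theorem linkInner_linkLap_self_mem_Icc (hSC : IsSC X) (hpos : ∀ s ∈ X, 0 < m s)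
    (hbal : ∀ u ∈ linkVerts X σ, IsBalancedAt X m (insert u σ)) (hconn : linkConn X σ)
    {lam kap : ℝ} (hspec : ∀ μ : ℝ, μ ≠ 0 → linkEig X m σ μ → lam ≤ μ ∧ μ ≤ kap)
    {χ : V → ℝ} (hχ : ∀ v ∉ linkVerts X σ, χ v = 0) (hmean : linkInner X m σ 1 χ = 0) :
    linkInner X m σ (linkLap X m σ χ) χ
      ∈ Set.Icc (lam * linkInner X m σ χ χ) (kap * linkInner X m σ χ χ) := by
  have key := (symLinkLap_isSymmetric (σ := σ) hSC hpos).inner_map_self_mem_Icc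
    (a := lam) (b := kap) (x := toLinkEuclid X m σ χ) ?_
  · change ⟪toLinkEuclid X m σ (linkLap X m σ (ofLinkEuclid X m σ _)), _⟫ ∈ _ at key
    simpa only [inner_toLinkEuclid hpos, ofLinkEuclid_toLinkEuclid hpos hχ] using key
  intro c e he hne
  rw [real_inner_comm, inner_toLinkEuclid hpos] at hne
  set f := ofLinkEuclid X m σ e
  obtain ⟨u, hu, hfu⟩ := exists_ne_zero_of_linkInner_ne_zero hne
  have heig (v) (hv : v ∈ linkVerts X σ) : linkLap X m σ f v = c * f v :=
    linkLap_ofLinkEuclid_of_eq_smul hpos he hv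
  by_cases hc : c = 0
  · -- a kernel vector is constant on the connected link, hence orthogonal to `χ`
    subst hc
    have hE : linkEnergy X m σ f = 0 := by
      rw [← two_mul_linkInner_linkLap_self hSC hpos hbal, linkInner,
        sum_eq_zero fun v hv => by rw [heig v hv, zero_mul, zero_mul, mul_zero], mul_zero]
    have hconst (v) (hv : v ∈ linkVerts X σ) : f v = f u :=
      eq_of_linkConn hconn (fun _ hu _ hv => eq_of_linkEnergy_eq_zero hpos hE hu hv) hv hu
    refine absurd ?_ hne
    calc linkInner X m σ χ f = f u * linkInner X m σ 1 χ := by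
          rw [linkInner, linkInner, mul_sum]
          exact sum_congr rfl fun v hv => by rw [hconst v hv, Pi.one_apply]; ring
      _ = 0 := by rw [hmean, mul_zero]
  · have hf0 (v) (hv : v ∉ linkVerts X σ) : f v = 0 := by
      simp only [f, ofLinkEuclid, if_neg hv, zero_mul]
    exact hspec c hc ⟨f, hf0, ⟨u, hu, hfu⟩, heig⟩

end Rayleigh

section Descent

variable {V : Type*} [Fintype V] [DecidableEq V] {X : Finset (Finset V)} {m : Finset V → ℝ}
  {τ : Finset V} {φ : V → ℝ} {μ : ℝ}

variable (X) in
def localize (τ : Finset V) (φ : V → ℝ) (μ : ℝ) (u : V) : V → ℝ :=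
  fun v => if v ∈ linkVerts X (insert u τ) then φ v - (1 - μ) * φ u else 0

lemma localize_of_mem {u v : V} (hv : v ∈ linkVerts X (insert u τ)) :
    localize X τ φ μ u v = φ v - (1 - μ) * φ u :=
  if_pos hv

lemma localize_of_notMem {u v : V} (hv : v ∉ linkVerts X (insert u τ)) :
    localize X τ φ μ u v = 0 :=
  if_neg hv

lemma linkInner_one_of_linkLap_eq (hpos : ∀ s ∈ X, 0 < m s) {u : V} (hu : u ∈ linkVerts X τ)
    (heig : linkLap X m τ φ u = μ * φ u) :
    linkInner X m (insert u τ) 1 φ = (1 - μ) * (m (insert u τ) * φ u) := by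
  have h := mul_linkLap (X := X) (f := φ) (hpos _ (mem_linkVerts.1 hu).2).ne'
  rw [heig] at h
  linarith

lemma linkInner_one_localize (hpos : ∀ s ∈ X, 0 < m s) {u : V} (hu : u ∈ linkVerts X τ)
    (hbal : IsBalancedAt X m (insert u τ)) (heig : linkLap X m τ φ u = μ * φ u) :
    linkInner X m (insert u τ) 1 (localize X τ φ μ u) = 0 := by
  have hφ := linkInner_one_of_linkLap_eq hpos hu heig
  rw [IsBalancedAt] at hbal
  simp only [linkInner, Pi.one_apply, one_mul] at hφ ⊢
  rw [sum_congr rfl fun v hv => by rw [localize_of_mem hv, mul_sub], sum_sub_distrib, hφ,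
    ← sum_mul, ← hbal]
  ring

lemma linkInner_localize_self (hpos : ∀ s ∈ X, 0 < m s) {u : V} (hu : u ∈ linkVerts X τ)
    (hbal : IsBalancedAt X m (insert u τ)) (heig : linkLap X m τ φ u = μ * φ u) :
    linkInner X m (insert u τ) (localize X τ φ μ u) (localize X τ φ μ u)
      = linkInner X m (insert u τ) φ φ - (1 - μ) ^ 2 * (m (insert u τ) * (φ u * φ u)) := by
  have hφ := linkInner_one_of_linkLap_eq hpos hu heig
  rw [IsBalancedAt] at hbal
  simp only [linkInner, Pi.one_apply, one_mul] at hφ ⊢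
  have hterm (v) (hv : v ∈ linkVerts X (insert u τ)) :
      m (insert v (insert u τ)) * (localize X τ φ μ u v * localize X τ φ μ u v)
        = m (insert v (insert u τ)) * (φ v * φ v)
          - 2 * (1 - μ) * φ u * (m (insert v (insert u τ)) * φ v)
          + (1 - μ) ^ 2 * (φ u * φ u) * m (insert v (insert u τ)) := by
    rw [localize_of_mem hv]
    ring
  rw [sum_congr rfl hterm, sum_add_distrib, sum_sub_distrib, ← mul_sum, ← mul_sum, hφ, ← hbal]
  ring

lemma sum_linkInner_localize_self (hSC : IsSC X) (hpos : ∀ s ∈ X, 0 < m s)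
    (hbal : ∀ u ∈ linkVerts X τ, IsBalancedAt X m (insert u τ))
    (heig : ∀ u ∈ linkVerts X τ, linkLap X m τ φ u = μ * φ u) :
    ∑ u ∈ linkVerts X τ, linkInner X m (insert u τ) (localize X τ φ μ u) (localize X τ φ μ u)
      = (1 - (1 - μ) ^ 2) * linkInner X m τ φ φ := by
  rw [sum_congr rfl fun u hu => linkInner_localize_self hpos hu (hbal u hu) (heig u hu),
    sum_sub_distrib, sum_linkInner_insert hSC hbal, ← mul_sum]
  simp only [linkInner]
  ring

lemma sum_linkInner_linkLap_localize (hSC : IsSC X) (hpos : ∀ s ∈ X, 0 < m s)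
    (hbal : ∀ u ∈ linkVerts X τ, IsBalancedAt X m (insert u τ))
    (hbal₂ : ∀ u ∈ linkVerts X τ, ∀ v ∈ linkVerts X (insert u τ),
      IsBalancedAt X m (insert v (insert u τ)))
    (heig : ∀ u ∈ linkVerts X τ, linkLap X m τ φ u = μ * φ u) :
    ∑ u ∈ linkVerts X τ, linkInner X m (insert u τ)
        (linkLap X m (insert u τ) (localize X τ φ μ u)) (localize X τ φ μ u)
      = μ * linkInner X m τ φ φ := by
  have hloc (u) (hu : u ∈ linkVerts X τ) :
      2 * linkInner X m (insert u τ)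
          (linkLap X m (insert u τ) (localize X τ φ μ u)) (localize X τ φ μ u)
        = linkEnergy X m (insert u τ) φ := by
    rw [two_mul_linkInner_linkLap_self hSC hpos (hbal₂ u hu)]
    exact linkEnergy_congr hSC fun v hv => by rw [localize_of_mem hv, sub_eq_add_neg]
  have hτ : 2 * linkInner X m τ (linkLap X m τ φ) φ = 2 * (μ * linkInner X m τ φ φ) := by
    congr 1
    rw [linkInner, linkInner, mul_sum]
    exact sum_congr rfl fun u hu => by rw [heig u hu]; ring
  rw [two_mul_linkInner_linkLap_self hSC hpos hbal, ← sum_linkEnergy_insert hSC hbal₂,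
    ← sum_congr rfl hloc, ← mul_sum] at hτ
  linarith

end Descent

lemma two_sub_inv_le_and_le_two_sub_inv {lam kap μ N : ℝ} (hlam : 0 < lam) (hlk : lam ≤ kap)
    (hN : 0 < N) (hμ : μ ≠ 0) (hP : 0 ≤ (1 - (1 - μ) ^ 2) * N)
    (h : μ * N ∈ Set.Icc (lam * ((1 - (1 - μ) ^ 2) * N)) (kap * ((1 - (1 - μ) ^ 2) * N))) :
    2 - 1 / lam ≤ μ ∧ μ ≤ 2 - 1 / kap := by
  have hμN : 0 < μ * N := lt_of_le_of_ne (le_trans (mul_nonneg hlam.le hP) h.1)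
    (mul_ne_zero hμ hN.ne').symm
  have hμpos : 0 < μ := pos_of_mul_pos_left hμN hN.le
  have hP' : (1 - (1 - μ) ^ 2) * N = (2 - μ) * (μ * N) := by ring
  rw [hP'] at h
  have hlow : lam * (2 - μ) ≤ 1 := by nlinarith [h.1]
  have hupp : 1 ≤ kap * (2 - μ) := by nlinarith [h.2]
  constructor
  · rw [sub_le_comm, one_div, inv_eq_one_div, le_div_iff₀ hlam]
    linarith
  · rw [le_sub_comm, one_div, inv_eq_one_div, div_le_iff₀ (hlam.trans_le hlk)]
    linarith

theorem stmt10_general {V : Type*} [Fintype V] [DecidableEq V] (n : ℕ)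
    (X : Finset (Finset V)) (hSC : IsSC X)
    (hconn : ∀ s ∈ X, s.card + 1 ≤ n → linkConn X s)
    (m : Finset V → ℝ) (hm : IsWeight X n m)
    (k : ℕ) (hk : k + 2 ≤ n)
    (lam kap : ℝ) (hlam : 0 < lam) (hlk : lam ≤ kap)
    (hspec : ∀ σ ∈ X, σ.card = k + 1 →
      ∀ μ : ℝ, μ ≠ 0 → linkEig X m σ μ → lam ≤ μ ∧ μ ≤ kap) :
    ∀ τ ∈ X, τ.card = k →
      ∀ μ : ℝ, μ ≠ 0 → linkEig X m τ μ → 2 - 1 / lam ≤ μ ∧ μ ≤ 2 - 1 / kap := by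
  intro τ _ hτ μ hμ ⟨φ, _, ⟨u₀, hu₀, hφu₀⟩, heig⟩
  have hcard {u : V} (hu : u ∈ linkVerts X τ) : (insert u τ).card = k + 1 := by
    rw [card_insert_of_mem_linkVerts hu, hτ]
  have hbal (u) (hu : u ∈ linkVerts X τ) : IsBalancedAt X m (insert u τ) :=
    hm.isBalancedAt (mem_linkVerts.1 hu).2 (by rw [hcard hu]; omega)
  have hbal₂ (u) (hu : u ∈ linkVerts X τ) (v) (hv : v ∈ linkVerts X (insert u τ)) :
      IsBalancedAt X m (insert v (insert u τ)) :=
    hm.isBalancedAt (mem_linkVerts.1 hv).2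
      (by rw [card_insert_of_mem_linkVerts hv, hcard hu]; omega)
  have hrayleigh (u) (hu : u ∈ linkVerts X τ) :=
    linkInner_linkLap_self_mem_Icc hSC hm.1 (hbal₂ u hu)
      (hconn _ (mem_linkVerts.1 hu).2 (by rw [hcard hu]; omega))
      (hspec _ (mem_linkVerts.1 hu).2 (hcard hu)) (fun _ => localize_of_notMem)
      (linkInner_one_localize hm.1 hu (hbal u hu) (heig u hu))
  apply two_sub_inv_le_and_le_two_sub_inv hlam hlk (linkInner_self_pos hm.1 hu₀ hφu₀) hμ
  · rw [← sum_linkInner_localize_self hSC hm.1 hbal heig]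
    exact sum_nonneg fun u _ => linkInner_self_nonneg hm.1 _
  · rw [← sum_linkInner_localize_self hSC hm.1 hbal heig,
      ← sum_linkInner_linkLap_localize hSC hm.1 hbal hbal₂ heig, mul_sum, mul_sum]
    exact ⟨sum_le_sum fun u hu => (hrayleigh u hu).1, sum_le_sum fun u hu => (hrayleigh u hu).2⟩

/-- (Spectral descent in links.) Let `X` be a pure `n`-dimensional weighted
simplicial complex, `n > 1`, with all links of dimension `> 0` connected.  Fix
`0 ≤ k ≤ n - 2` and `κ ≥ λ > 0`.  If for every `k`-simplex `σ` (face with `σ.card = k+1`) the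
nonzero spectrum of the upper `0`-Laplacian of the link `X_σ` is contained in `[λ, κ]`, then
for every `(k-1)`-simplex `τ` (face with `τ.card = k`) the nonzero spectrum of the upper
`0`-Laplacian of `X_τ` is contained in `[2 - 1/λ, 2 - 1/κ]`. -/
theorem stmt10 {V : Type*} [Fintype V] [DecidableEq V] (n : ℕ) (hn : 1 < n)
    (X : Finset (Finset V)) (hSC : IsSC X) (hpure : IsPure X n)
    (hconn : ∀ s ∈ X, s.card + 1 ≤ n → linkConn X s)
    (m : Finset V → ℝ) (hm : IsWeight X n m)
    (k : ℕ) (hk : k + 2 ≤ n)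
    (lam kap : ℝ) (hlam : 0 < lam) (hlk : lam ≤ kap)
    (hspec : ∀ σ ∈ X, σ.card = k + 1 →
      ∀ μ : ℝ, μ ≠ 0 → linkEig X m σ μ → lam ≤ μ ∧ μ ≤ kap) :
    ∀ τ ∈ X, τ.card = k →
      ∀ μ : ℝ, μ ≠ 0 → linkEig X m τ μ → 2 - 1 / lam ≤ μ ∧ μ ≤ 2 - 1 / kap :=
  stmt10_general n X hSC hconn m hm k hk lam kap hlam hlk hspec
end

section
/- Let G be a finite connected weighted graph (1-dimensional weighted simplicial complex) with weight m, and let λ be the smallest positive eigenvalue of the weighted graph Laplacian Δ_0^+. Then for every nonempty set U of vertices: λ·(m(U)/m(V)) + m(U, V∖U)/m(U) ≥ λ, where m(U) = Σ_{u∈U} m(u), m(V) = Σ_{v∈V} m(v), and m(U, V∖U) is the total weight of edges between U and its complement. In particular h^0(G) ≥ λ. -/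
/-
Write `⟨f, g⟩ = Σ m(v) f(v) g(v)`. The Laplacian is self-adjoint for this inner product, with
`⟨Δf, f⟩ = ½ Σ_{u,v} m(u,v) (f u - f v)²`, so by connectivity its kernel is the constants.
Expanding `f ⟂ 1` in an orthonormal eigenbasis gives the Rayleigh bound `λ ⟨f, f⟩ ≤ ⟨Δf, f⟩`.
For `f = 1_U - m(U)/m(V)` one has `f ⟂ 1`, `⟨f, f⟩ = m(U) (1 - m(U)/m(V))` and
`⟨Δf, f⟩ = m(U, V∖U)`, which is the inequality. A positive eigenvalue forces two distinct
vertices, and then the set defining `h⁰(G)` is bounded above (test it on a singleton), so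
`λ ≤ h⁰(G)`.
-/

open Finset

open scoped Classical

/-- The weight of a vertex of a weighted graph: the sum of the weights of the incident
edges. -/
noncomputable def vWeight {V : Type*} [Fintype V] (E : V → V → Prop) (w : V → V → ℝ)
    (v : V) : ℝ :=
  ∑ u : V, if E v u then w v u else 0

/-- The weighted graph Laplacian
`Δ₀⁺φ(u) = φ(u) - Σ_{v : (u,v) ∈ E} (m((u,v))/m(u)) φ(v)`. -/
noncomputable def graphLap {V : Type*} [Fintype V] (E : V → V → Prop) (w : V → V → ℝ)
    (φ : V → ℝ) : V → ℝ :=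
  fun u => φ u - ∑ v : V, if E u v then w u v / vWeight E w u * φ v else 0

/-- `μ` is an eigenvalue of the weighted graph Laplacian. -/
def graphEig {V : Type*} [Fintype V] (E : V → V → Prop) (w : V → V → ℝ) (μ : ℝ) : Prop :=
  ∃ φ : V → ℝ, φ ≠ 0 ∧ ∀ u, graphLap E w φ u = μ * φ u

/-- The total weight `m(U) = Σ_{u ∈ U} m(u)` of a set of vertices. -/
noncomputable def setWeight {V : Type*} [Fintype V] (E : V → V → Prop) (w : V → V → ℝ)
    (U : Finset V) : ℝ :=
  ∑ u ∈ U, vWeight E w u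

/-- The total weight `m(U, V∖U)` of the edges between `U` and its complement. -/
noncomputable def cutWeight {V : Type*} [Fintype V] (E : V → V → Prop) (w : V → V → ℝ)
    (U : Finset V) : ℝ :=
  ∑ u ∈ U, ∑ v ∈ Uᶜ, if E u v then w u v else 0

open scoped RealInnerProductSpace

theorem LinearMap.IsSymmetric.mul_inner_self_le_of_mem_orthogonal_ker
    {E : Type*} [NormedAddCommGroup E] [InnerProductSpace ℝ E] [FiniteDimensional ℝ E]
    {T : E →ₗ[ℝ] E} (hT : T.IsSymmetric) {c : ℝ}
    (hc : ∀ μ, Module.End.HasEigenvalue T μ → μ ≠ 0 → c ≤ μ) {x : E}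
    (hx : x ∈ (LinearMap.ker T)ᗮ) : c * ⟪x, x⟫ ≤ ⟪T x, x⟫ := by
  let b := hT.eigenvectorBasis rfl
  let μ := hT.eigenvalues rfl
  have hTb : ∀ i, T (b i) = μ i • b i := hT.apply_eigenvectorBasis rfl
  calc c * ⟪x, x⟫ = ∑ i, c * ⟪b i, x⟫ ^ 2 := by
        rw [← b.sum_inner_mul_inner, mul_sum]; simp_rw [real_inner_comm x, sq]
    _ ≤ ∑ i, μ i * ⟪b i, x⟫ ^ 2 := by
      refine sum_le_sum fun i _ => ?_
      by_cases hμ : μ i = 0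
      · have hker : b i ∈ LinearMap.ker T := by simp [hTb, hμ]
        simp [Submodule.inner_right_of_mem_orthogonal hker hx]
      · gcongr
        exact hc _ (hT.hasEigenvalue_eigenvalues rfl i) hμ
    _ = ⟪T x, x⟫ := by
      rw [← b.sum_inner_mul_inner]
      refine sum_congr rfl fun i _ => ?_
      rw [hT, hTb, real_inner_smul_right, real_inner_comm x]; ring

section WeightedGraph

variable {V : Type*} (E : V → V → Prop) (w : V → V → ℝ)

noncomputable def adjWeight (u v : V) : ℝ := if E u v then w u v else 0

variable {E w} in
lemma adjWeight_comm (hsymm : ∀ u v, E u v → E v u) (hwsymm : ∀ u v, w u v = w v u)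
    (u v : V) : adjWeight E w u v = adjWeight E w v u := by
  by_cases h : E u v
  · simp [adjWeight, h, hsymm u v h, hwsymm u v]
  · have h' : ¬E v u := fun h' => h (hsymm v u h')
    simp [adjWeight, h, h']

variable {E w} in
lemma adjWeight_nonneg (hw : ∀ u v, E u v → 0 < w u v) (u v : V) : 0 ≤ adjWeight E w u v := by
  unfold adjWeight; split_ifs with h
  exacts [(hw u v h).le, le_rfl]

variable [Fintype V]

noncomputable def weightedInner (f g : V → ℝ) : ℝ := ∑ v, vWeight E w v * f v * g v

noncomputable def dirichletForm (f : V → ℝ) : ℝ :=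
  (∑ u, ∑ v, adjWeight E w u v * (f u - f v) ^ 2) / 2

variable {E w}

lemma vWeight_eq_sum_adjWeight (v : V) : vWeight E w v = ∑ u, adjWeight E w v u := rfl

lemma graphLap_apply (φ : V → ℝ) (u : V) :
    graphLap E w φ u = φ u - (∑ v, adjWeight E w u v * φ v) / vWeight E w u := by
  simp only [graphLap, adjWeight, sum_div]
  congr 1
  refine sum_congr rfl fun v _ => ?_
  split_ifs <;> ring

lemma sum_adjWeight_mul_swap (hadj : ∀ u v, adjWeight E w u v = adjWeight E w v u)
    (F : V → V → ℝ) :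
    ∑ u, ∑ v, adjWeight E w u v * F u v = ∑ u, ∑ v, adjWeight E w u v * F v u := by
  rw [sum_comm]
  simp_rw [hadj]

lemma weightedInner_comm (f g : V → ℝ) : weightedInner E w f g = weightedInner E w g f := by
  simp only [weightedInner, mul_right_comm]

lemma weightedInner_graphLap (hm : ∀ v, vWeight E w v ≠ 0) (f g : V → ℝ) :
    weightedInner E w (graphLap E w f) g =
      weightedInner E w f g - ∑ u, ∑ v, adjWeight E w u v * (f v * g u) := by
  simp only [weightedInner, graphLap_apply, mul_sub, sub_mul, sum_sub_distrib,
    mul_div_cancel₀ _ (hm _), sum_mul, mul_assoc]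

lemma weightedInner_graphLap_comm (hm : ∀ v, vWeight E w v ≠ 0)
    (hadj : ∀ u v, adjWeight E w u v = adjWeight E w v u) (f g : V → ℝ) :
    weightedInner E w (graphLap E w f) g = weightedInner E w f (graphLap E w g) := by
  rw [weightedInner_comm f, weightedInner_graphLap hm, weightedInner_graphLap hm,
    weightedInner_comm g, sum_adjWeight_mul_swap hadj]
  simp only [mul_comm]

lemma weightedInner_graphLap_self (hm : ∀ v, vWeight E w v ≠ 0)
    (hadj : ∀ u v, adjWeight E w u v = adjWeight E w v u) (f : V → ℝ) :
    weightedInner E w (graphLap E w f) f = dirichletForm E w f := by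
  have hself : weightedInner E w f f = ∑ u, ∑ v, adjWeight E w u v * f u ^ 2 := by
    simp only [weightedInner, vWeight_eq_sum_adjWeight, sum_mul, mul_assoc, sq]
  have hswap := sum_adjWeight_mul_swap hadj fun u _ => f u ^ 2
  rw [weightedInner_graphLap hm, hself, dirichletForm]
  simp only [sub_sq, mul_add, mul_sub, sum_add_distrib, sum_sub_distrib] at hswap ⊢
  have hcross : ∑ u, ∑ v, adjWeight E w u v * (2 * f u * f v) =
      2 * ∑ u, ∑ v, adjWeight E w u v * (f v * f u) := by
    simp only [mul_sum]
    exact sum_congr rfl fun u _ => sum_congr rfl fun v _ => by ring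
  rw [← hswap, hcross]
  ring

lemma dirichletForm_nonneg (hadj₀ : ∀ u v, 0 ≤ adjWeight E w u v) (f : V → ℝ) :
    0 ≤ dirichletForm E w f := by
  unfold dirichletForm
  exact div_nonneg (sum_nonneg fun u _ => sum_nonneg fun v _ =>
    mul_nonneg (hadj₀ u v) (sq_nonneg _)) zero_le_two

lemma eq_of_dirichletForm_eq_zero (hw : ∀ u v, E u v → 0 < w u v) {f : V → ℝ}
    (hf : dirichletForm E w f = 0) {u v : V} (huv : E u v) : f u = f v := by
  have hterm u v : 0 ≤ adjWeight E w u v * (f u - f v) ^ 2 :=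
    mul_nonneg (adjWeight_nonneg hw u v) (sq_nonneg _)
  have hsum : ∑ u, ∑ v, adjWeight E w u v * (f u - f v) ^ 2 = 0 := by
    unfold dirichletForm at hf; linarith
  rw [sum_eq_zero_iff_of_nonneg fun u _ => sum_nonneg fun v _ => hterm u v] at hsum
  have huv' :=
    (sum_eq_zero_iff_of_nonneg fun v _ => hterm u v).1 (hsum u (mem_univ u)) v (mem_univ v)
  simp only [adjWeight, if_pos huv, mul_eq_zero, (hw u v huv).ne', false_or, sq_eq_zero_iff] at huv'
  exact sub_eq_zero.1 huv'

lemma eq_of_graphLap_eq_zero (hm : ∀ v, vWeight E w v ≠ 0)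
    (hadj : ∀ u v, adjWeight E w u v = adjWeight E w v u) (hw : ∀ u v, E u v → 0 < w u v)
    (hconn : ∀ u v : V, Relation.ReflTransGen E u v) {f : V → ℝ} (hf : graphLap E w f = 0)
    (u v : V) : f u = f v := by
  have hD : dirichletForm E w f = 0 := by
    rw [← weightedInner_graphLap_self hm hadj, hf]; simp [weightedInner]
  induction hconn u v with
  | refl => rfl
  | tail _ hbc ih => exact ih.trans (eq_of_dirichletForm_eq_zero hw hD hbc)

variable (E w) in
noncomputable def graphLapLinear : Module.End ℝ (V → ℝ) where
  toFun := graphLap E w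
  map_add' f g := by
    ext u
    simp only [graphLap_apply, Pi.add_apply, mul_add, sum_add_distrib, add_div]
    ring
  map_smul' c f := by
    ext u
    simp only [graphLap_apply, Pi.smul_apply, smul_eq_mul, RingHom.id_apply, mul_left_comm _ c,
      ← mul_sum, mul_div_assoc]
    ring

/- Multiplication by `√m` is an isometry from the `m`-weighted inner product to the Euclidean one;
it conjugates `Δ₀⁺` to a symmetric operator, to which the spectral theorem applies. -/
variable (E w) in
noncomputable def sqrtWeightEquiv (hm : ∀ v, 0 < vWeight E w v) :
    (V → ℝ) ≃ₗ[ℝ] EuclideanSpace ℝ V where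
  toFun f := WithLp.toLp 2 fun v => √(vWeight E w v) * f v
  invFun x v := x v / √(vWeight E w v)
  map_add' f g := by ext; simp [mul_add]
  map_smul' c f := by ext; simp [mul_left_comm]
  left_inv f := by ext v; simp [(Real.sqrt_pos.2 (hm v)).ne']
  right_inv x := by ext v; simp [mul_div_cancel₀ _ (Real.sqrt_pos.2 (hm v)).ne']

lemma inner_sqrtWeightEquiv (hm : ∀ v, 0 < vWeight E w v) (f g : V → ℝ) :
    ⟪sqrtWeightEquiv E w hm f, sqrtWeightEquiv E w hm g⟫ = weightedInner E w f g := by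
  simp only [PiLp.inner_apply, sqrtWeightEquiv, LinearEquiv.coe_mk, LinearMap.coe_mk,
    AddHom.coe_mk, RCLike.inner_apply, conj_trivial, weightedInner]
  refine sum_congr rfl fun v _ => ?_
  have := Real.mul_self_sqrt (hm v).le
  linear_combination (f v * g v) * this

lemma nonneg_of_graphLap_eq_smul (hm : ∀ v, 0 < vWeight E w v)
    (hadj : ∀ u v, adjWeight E w u v = adjWeight E w v u)
    (hadj₀ : ∀ u v, 0 ≤ adjWeight E w u v) {μ : ℝ} {f : V → ℝ} (hf : f ≠ 0)
    (hμ : graphLap E w f = μ • f) : 0 ≤ μ := by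
  have hD := dirichletForm_nonneg hadj₀ f
  rw [← weightedInner_graphLap_self (fun v => (hm v).ne') hadj, hμ, ← inner_sqrtWeightEquiv hm,
    map_smul, real_inner_smul_left] at hD
  exact nonneg_of_mul_nonneg_left hD
    (real_inner_self_pos.2 ((sqrtWeightEquiv E w hm).map_ne_zero_iff.2 hf))

theorem mul_weightedInner_self_le_weightedInner_graphLap [Nonempty V]
    (hm : ∀ v, 0 < vWeight E w v) (hadj : ∀ u v, adjWeight E w u v = adjWeight E w v u)
    (hw : ∀ u v, E u v → 0 < w u v) (hconn : ∀ u v : V, Relation.ReflTransGen E u v) {c : ℝ}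
    (hc : c ∈ lowerBounds {μ | 0 < μ ∧ graphEig E w μ}) {f : V → ℝ}
    (hf : weightedInner E w f 1 = 0) :
    c * weightedInner E w f f ≤ weightedInner E w (graphLap E w f) f := by
  set e := sqrtWeightEquiv E w hm
  set T := e.conj (graphLapLinear E w)
  have hTe (g : V → ℝ) : T (e g) = e (graphLap E w g) := by
    simp [T, graphLapLinear]
  have hT : T.IsSymmetric := fun x y => by
    obtain ⟨g₁, rfl⟩ := e.surjective x
    obtain ⟨g₂, rfl⟩ := e.surjective y
    rw [hTe, hTe, inner_sqrtWeightEquiv, inner_sqrtWeightEquiv,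
      weightedInner_graphLap_comm (fun v => (hm v).ne') hadj]
  have hc' (μ : ℝ) (hμ : Module.End.HasEigenvalue T μ) (hμ0 : μ ≠ 0) : c ≤ μ := by
    obtain ⟨x, hx, hx0⟩ := hμ.exists_hasEigenvector
    obtain ⟨g, rfl⟩ := e.surjective x
    have hg : graphLap E w g = μ • g :=
      e.injective (by rw [← hTe, map_smul]; exact Module.End.mem_eigenspace_iff.1 hx)
    have hg0 : g ≠ 0 := by rintro rfl; simp at hx0
    exact hc ⟨(nonneg_of_graphLap_eq_smul hm hadj (adjWeight_nonneg hw) hg0 hg).lt_of_ne' hμ0,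
      g, hg0, fun u => congrFun hg u⟩
  have hker : e f ∈ (LinearMap.ker T)ᗮ := by
    refine (Submodule.mem_orthogonal _ _).2 fun x hx => ?_
    obtain ⟨g, rfl⟩ := e.surjective x
    have hg : graphLap E w g = 0 :=
      e.injective (by rw [← hTe, map_zero]; exact hx)
    obtain ⟨u⟩ := ‹Nonempty V›
    have hconst : g = g u • 1 := funext fun v => by
      simp [eq_of_graphLap_eq_zero (fun v => (hm v).ne') hadj hw hconn hg v u]
    rw [hconst, map_smul, real_inner_smul_left, inner_sqrtWeightEquiv, weightedInner_comm, hf,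
      mul_zero]
  have := hT.mul_inner_self_le_of_mem_orthogonal_ker hc' hker
  rwa [hTe, inner_sqrtWeightEquiv, inner_sqrtWeightEquiv] at this

lemma dirichletForm_sub_const (f : V → ℝ) (t : ℝ) :
    dirichletForm E w (fun v => f v - t) = dirichletForm E w f := by
  simp only [dirichletForm, sub_sub_sub_cancel_right]

lemma dirichletForm_indicator (hadj : ∀ u v, adjWeight E w u v = adjWeight E w v u)
    (U : Finset V) :
    dirichletForm E w (fun v => if v ∈ U then 1 else 0) = cutWeight E w U := by
  set χ : V → ℝ := fun v => if v ∈ U then 1 else 0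
  have hsq (u v : V) : (χ u - χ v) ^ 2 = χ u * (1 - χ v) + χ v * (1 - χ u) := by
    simp only [χ]; split_ifs <;> norm_num
  have hcut : ∑ u, ∑ v, adjWeight E w u v * (χ u * (1 - χ v)) = cutWeight E w U := by
    simp only [χ, mul_ite, mul_one, mul_zero, mul_sub]
    simp only [sum_ite_mem, univ_inter, sum_ite_irrel, sum_const_zero, sum_sub_distrib]
    rw [← sum_sub_distrib]
    refine sum_congr rfl fun u _ => ?_
    rw [← sum_compl_add_sum U]
    simp only [adjWeight, add_sub_cancel_right]
  have hswap := sum_adjWeight_mul_swap hadj fun u v => χ u * (1 - χ v)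
  simp only [dirichletForm, hsq, mul_add, sum_add_distrib, ← hswap, hcut]
  ring

theorem cheeger_inequality (hm : ∀ v, 0 < vWeight E w v)
    (hadj : ∀ u v, adjWeight E w u v = adjWeight E w v u) (hw : ∀ u v, E u v → 0 < w u v)
    (hconn : ∀ u v : V, Relation.ReflTransGen E u v) {c : ℝ}
    (hc : c ∈ lowerBounds {μ | 0 < μ ∧ graphEig E w μ}) {U : Finset V} (hU : U.Nonempty) :
    c * (setWeight E w U / setWeight E w univ) + cutWeight E w U / setWeight E w U ≥ c := by
  have : Nonempty V := ⟨hU.choose⟩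
  have hmU : 0 < setWeight E w U := sum_pos (fun v _ => hm v) hU
  have hmV : 0 < setWeight E w univ := sum_pos (fun v _ => hm v) univ_nonempty
  set t := setWeight E w U / setWeight E w univ
  have htV : setWeight E w univ * t = setWeight E w U := mul_div_cancel₀ _ hmV.ne'
  set χ : V → ℝ := fun v => if v ∈ U then 1 else 0
  set f : V → ℝ := fun v => χ v - t
  have hf1 : weightedInner E w f 1 = 0 := by
    simp only [weightedInner, mul_sub, mul_ite, mul_one, mul_zero, Pi.one_apply, sum_sub_distrib,
      sum_ite_mem, univ_inter, ← sum_mul, f, χ]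
    change setWeight E w U - setWeight E w univ * t = 0
    rw [htV, sub_self]
  have hff : weightedInner E w f f = setWeight E w U * (1 - t) := by
    simp only [weightedInner, mul_sub, mul_ite, mul_one, mul_zero, sub_mul, ite_mul, zero_mul,
      sum_sub_distrib, sum_ite_mem, univ_inter, inter_self, ← sum_mul, f, χ]
    change setWeight E w U - setWeight E w U * t -
      (setWeight E w U * t - setWeight E w univ * t * t) = _
    linear_combination t * htV
  have hray := mul_weightedInner_self_le_weightedInner_graphLap hm hadj hw hconn hc hf1
  rw [weightedInner_graphLap_self (fun v => (hm v).ne') hadj, dirichletForm_sub_const,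
    dirichletForm_indicator hadj, hff] at hray
  have : c * (1 - t) ≤ cutWeight E w U / setWeight E w U := by
    rw [le_div_iff₀ hmU]; linarith
  linarith

lemma nontrivial_of_graphEig (hm : ∀ v, vWeight E w v ≠ 0) {μ : ℝ} (hμ : μ ≠ 0)
    (h : graphEig E w μ) : Nontrivial V := by
  by_contra hV
  have : Subsingleton V := not_nontrivial_iff_subsingleton.1 hV
  obtain ⟨φ, hφ, heig⟩ := h
  obtain ⟨u, hu⟩ := Function.ne_iff.1 hφ
  have hmu : vWeight E w u = adjWeight E w u u := Fintype.sum_subsingleton _ u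
  have hLu : graphLap E w φ u = 0 := by
    rw [graphLap_apply, Fintype.sum_subsingleton _ u, ← hmu, mul_div_cancel_left₀ _ (hm u),
      sub_self]
  exact hμ ((mul_eq_zero.1 ((heig u).symm.trans hLu)).resolve_right hu)

lemma bddAbove_setOf_cheeger [Nontrivial V] (hm : ∀ v, 0 < vWeight E w v) :
    BddAbove {ε : ℝ | ∀ U : Finset V, U.Nonempty →
      ε * (setWeight E w U / setWeight E w univ) + cutWeight E w U / setWeight E w U ≥ ε} := by
  obtain ⟨v, v', hvv'⟩ := exists_pair_ne V
  have hmV : 0 < setWeight E w univ := sum_pos (fun u _ => hm u) univ_nonempty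
  set q := setWeight E w {v} / setWeight E w univ
  have hq : q < 1 := by
    rw [div_lt_one hmV]
    exact sum_lt_sum_of_subset (subset_univ _) (mem_univ v') (by simpa using hvv'.symm) (hm v')
      fun u _ _ => (hm u).le
  refine ⟨cutWeight E w {v} / setWeight E w {v} / (1 - q), fun ε hε => ?_⟩
  rw [le_div_iff₀ (sub_pos.2 hq), mul_one_sub]
  linarith [hε {v} (singleton_nonempty v)]

end WeightedGraph

theorem stmt14_general {V : Type*} [Fintype V]
    (E : V → V → Prop) (hsymm : ∀ u v, E u v → E v u)
    (w : V → V → ℝ) (hw : ∀ u v, E u v → 0 < w u v) (hwsymm : ∀ u v, w u v = w v u)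
    (hNoIso : ∀ v, 0 < vWeight E w v)
    (hconn : ∀ u v : V, Relation.ReflTransGen E u v)
    (lam : ℝ) (hlam : IsLeast {μ : ℝ | 0 < μ ∧ graphEig E w μ} lam) :
    (∀ U : Finset V, U.Nonempty →
      lam * (setWeight E w U / setWeight E w Finset.univ) +
          cutWeight E w U / setWeight E w U ≥ lam) ∧
    lam ≤ sSup {ε : ℝ | 0 ≤ ε ∧ ∀ U : Finset V, U.Nonempty →
      ε * (setWeight E w U / setWeight E w Finset.univ) +
          cutWeight E w U / setWeight E w U ≥ ε} := by
  have hadj := adjWeight_comm hsymm hwsymm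
  have hcheeger (U : Finset V) (hU : U.Nonempty) :=
    cheeger_inequality hNoIso hadj hw hconn hlam.2 hU
  have : Nontrivial V := nontrivial_of_graphEig (fun v => (hNoIso v).ne') hlam.1.1.ne' hlam.1.2
  exact ⟨hcheeger,
    le_csSup ((bddAbove_setOf_cheeger hNoIso).mono fun _ h => h.2) ⟨hlam.1.1.le, hcheeger⟩⟩

/-- (The Cheeger-type inequality `h⁰(G) ≥ λ(G)`.)  Let `G` be a finite
connected weighted graph with weight `m` (positive symmetric edge weights, every vertex in an
edge), and let `λ` be the smallest positive eigenvalue of the weighted graph Laplacian `Δ₀⁺`.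
Then for every nonempty set `U` of vertices
`λ·(m(U)/m(V)) + m(U, V∖U)/m(U) ≥ λ`; in particular `h⁰(G) ≥ λ`, where `h⁰(G)` is the largest
`ε ≥ 0` such that this inequality holds with `ε` in place of `λ` for all nonempty `U`. -/
theorem stmt14 {V : Type*} [Fintype V] [Nonempty V]
    (E : V → V → Prop) (hsymm : ∀ u v, E u v → E v u) (hirr : ∀ u, ¬ E u u)
    (w : V → V → ℝ) (hw : ∀ u v, E u v → 0 < w u v) (hwsymm : ∀ u v, w u v = w v u)
    (hNoIso : ∀ v, 0 < vWeight E w v)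
    (hconn : ∀ u v : V, Relation.ReflTransGen E u v)
    (lam : ℝ) (hlam : IsLeast {μ : ℝ | 0 < μ ∧ graphEig E w μ} lam) :
    (∀ U : Finset V, U.Nonempty →
      lam * (setWeight E w U / setWeight E w Finset.univ) +
          cutWeight E w U / setWeight E w U ≥ lam) ∧
    lam ≤ sSup {ε : ℝ | 0 ≤ ε ∧ ∀ U : Finset V, U.Nonempty →
      ε * (setWeight E w U / setWeight E w Finset.univ) +
          cutWeight E w U / setWeight E w U ≥ ε} :=
  stmt14_general E hsymm w hw hwsymm hNoIso hconn lam hlam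
end

section
/- Let G be a finite weighted graph with no isolated vertices. Then 2h(G) ≥ h^0(G), where h(G) = min over nonempty U with m(U) ≤ m(V)/2 of m(U, V∖U)/m(U), and h^0(G) is the largest ε ≥ 0 with ε·m(U)/m(V) + m(U,V∖U)/m(U) ≥ ε for all nonempty U ⊆ V. -/
open Finset

open scoped Classical

/-- (`2h(G) ≥ h⁰(G)`.)  Let `G` be a finite weighted graph with no isolated
vertices.  Then `2 h(G) ≥ h⁰(G)`, where
`h(G) = min { m(U, V∖U)/m(U) : ∅ ≠ U, m(U) ≤ m(V)/2 }` and `h⁰(G)` is the largest `ε ≥ 0`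
with `ε·m(U)/m(V) + m(U, V∖U)/m(U) ≥ ε` for all nonempty `U ⊆ V`. -/
theorem stmt15 {V : Type*} [Fintype V] [Nonempty V]
    (E : V → V → Prop) (hsymm : ∀ u v, E u v → E v u) (hirr : ∀ u, ¬ E u u)
    (w : V → V → ℝ) (hw : ∀ u v, E u v → 0 < w u v) (hwsymm : ∀ u v, w u v = w v u)
    (hNoIso : ∀ v, 0 < vWeight E w v) :
    sSup {ε : ℝ | 0 ≤ ε ∧ ∀ U : Finset V, U.Nonempty →
        ε * (setWeight E w U / setWeight E w Finset.univ) +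
            cutWeight E w U / setWeight E w U ≥ ε} ≤
      2 * sInf {r : ℝ | ∃ U : Finset V, U.Nonempty ∧
        setWeight E w U ≤ setWeight E w Finset.univ / 2 ∧
        r = cutWeight E w U / setWeight E w U} := by
  classical
  set M := setWeight E w Finset.univ with hM
  have hvnn : ∀ v, (0:ℝ) ≤ vWeight E w v := fun v => le_of_lt (hNoIso v)
  have hsetpos : ∀ U : Finset V, U.Nonempty → 0 < setWeight E w U := by
    intro U hU
    exact Finset.sum_pos (fun v _ => hNoIso v) hU
  have hMpos : 0 < M := hsetpos _ Finset.univ_nonempty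
  have hcutnn : ∀ U : Finset V, 0 ≤ cutWeight E w U := by
    intro U
    apply Finset.sum_nonneg
    intro u _
    apply Finset.sum_nonneg
    intro v _
    by_cases h : E u v
    · simp [h, le_of_lt (hw u v h)]
    · simp [h]
  -- |V| ≥ 2
  have hcard : 2 ≤ Fintype.card V := by
    by_contra h
    push_neg at h
    have hsub : Subsingleton V := by
      rw [← Fintype.card_le_one_iff_subsingleton]
      omega
    obtain ⟨v⟩ := (inferInstance : Nonempty V)
    have : vWeight E w v = 0 := by
      unfold vWeight
      apply Finset.sum_eq_zero
      intro u _
      have : u = v := Subsingleton.elim u v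
      subst this
      simp [hirr u]
    linarith [hNoIso v]
  -- the inf-set is nonempty
  obtain ⟨u, -, hu⟩ := Finset.exists_min_image Finset.univ (vWeight E w)
    Finset.univ_nonempty
  have hsum : (Fintype.card V : ℝ) * vWeight E w u ≤ M := by
    rw [hM]
    unfold setWeight
    calc (Fintype.card V : ℝ) * vWeight E w u
        = ∑ _v : V, vWeight E w u := by
          rw [Finset.sum_const, Finset.card_univ, nsmul_eq_mul]
      _ ≤ ∑ v : V, vWeight E w v := Finset.sum_le_sum (fun v _ => hu v (Finset.mem_univ v))
  have hule : setWeight E w {u} ≤ M / 2 := by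
    have h1 : setWeight E w {u} = vWeight E w u := by simp [setWeight]
    have h2 : (2:ℝ) ≤ (Fintype.card V : ℝ) := by exact_mod_cast hcard
    rw [h1]
    nlinarith [hvnn u]
  have hTne : {r : ℝ | ∃ U : Finset V, U.Nonempty ∧
      setWeight E w U ≤ setWeight E w Finset.univ / 2 ∧
      r = cutWeight E w U / setWeight E w U}.Nonempty :=
    ⟨_, {u}, Finset.singleton_nonempty u, hule, rfl⟩
  apply Real.sSup_le
  · rintro ε ⟨hε0, hεU⟩
    have hhalf : ε / 2 ≤ sInf {r : ℝ | ∃ U : Finset V, U.Nonempty ∧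
        setWeight E w U ≤ setWeight E w Finset.univ / 2 ∧
        r = cutWeight E w U / setWeight E w U} := by
      apply le_csInf hTne
      rintro r ⟨U, hUne, hUhalf, rfl⟩
      have hUpos := hsetpos U hUne
      have hkey := hεU U hUne
      have hratio : setWeight E w U / setWeight E w Finset.univ ≤ 1 / 2 := by
        rw [div_le_div_iff₀ hMpos (by norm_num)]
        linarith
      have hratio0 : 0 ≤ setWeight E w U / setWeight E w Finset.univ :=
        div_nonneg (le_of_lt hUpos) (le_of_lt hMpos)
      nlinarith [hkey, mul_le_mul_of_nonneg_left hratio hε0]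
    linarith
  · have := Real.sInf_nonneg (s := {r : ℝ | ∃ U : Finset V, U.Nonempty ∧
        setWeight E w U ≤ setWeight E w Finset.univ / 2 ∧
        r = cutWeight E w U / setWeight E w U}) ?_
    · linarith
    · rintro r ⟨U, hUne, -, rfl⟩
      exact div_nonneg (hcutnn U) (le_of_lt (hsetpos U hUne))
end

section
/- Let X be a pure n-dimensional weighted simplicial complex. For 0 ≤ k ≤ n-1 and pairwise disjoint sets U_0, …, U_k of vertices, let χ_{U_0,...,U_k} be the indicator k-form. Then ‖χ_{U_0,...,U_k}‖² = m(U_0,...,U_k) when all U_i are nonempty (and 0 otherwise), and d χ_{U_0,...,U_k} = (-1)^{k+1} χ_{U_0,...,U_{k+1}}, where U_{k+1} = X^(0) ∖ (U_0 ∪ … ∪ U_k); consequently ‖d χ_{U_0,...,U_k}‖² = m(U_0,...,U_{k+1}) when all of U_0,…,U_{k+1} are nonempty. -/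
open Finset

open scoped Classical

/-- The indicator `k`-form `χ_{U_0,…,U_k}` of a tuple of pairwise disjoint vertex sets:
`χ((u_0,…,u_k)) = sgn(π)` if there is a permutation `π` with `u_{π(i)} ∈ U_i` for all `i`,
and `0` otherwise. -/
noncomputable def chiForm {V : Type*} {a : ℕ} (U : Fin a → Finset V) : (Fin a → V) → ℝ :=
  fun f =>
    if h : ∃ π : Equiv.Perm (Fin a), ∀ i, f (π i) ∈ U i then
      ((Equiv.Perm.sign h.choose : ℤ) : ℝ)
    else 0

/-- `m(U_0,…,U_{a-1})`: the total weight of the `(a-1)`-simplices with one vertex in each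
`U_i` (each such simplex counted once via its unique ordering compatible with the `U_i`). -/
noncomputable def mSets {V : Type*} [Fintype V] [DecidableEq V] (X : Finset (Finset V))
    (m : Finset V → ℝ) {a : ℕ} (U : Fin a → Finset V) : ℝ :=
  ∑ f : Fin a → V,
    if OSimp X f ∧ ∀ i, f i ∈ U i then m (Finset.image f Finset.univ) else 0

/-- The vertex set `X^{(0)}` of `X`. -/
def vertsOf {V : Type*} [Fintype V] [DecidableEq V] (X : Finset (Finset V)) : Finset V :=
  Finset.univ.filter (fun v => {v} ∈ X)

section AuxLemmas

variable {V : Type*} [Fintype V] [DecidableEq V]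

private lemma perm_unique {a : ℕ} {U : Fin a → Finset V}
    (hdisj : ∀ i j, i ≠ j → Disjoint (U i) (U j)) {f : Fin a → V}
    {π π' : Equiv.Perm (Fin a)} (h : ∀ i, f (π i) ∈ U i) (h' : ∀ i, f (π' i) ∈ U i) :
    π = π' := by
  apply Equiv.ext
  intro i
  have h1 : f (π i) ∈ U i := h i
  have h2 : f (π i) ∈ U (π'.symm (π i)) := by
    have := h' (π'.symm (π i))
    simpa using this
  have hii : i = π'.symm (π i) := by
    by_contra hne
    exact (Finset.disjoint_left.mp (hdisj _ _ hne) h1) h2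
  have := congrArg π' hii
  simpa using this.symm

private lemma chiForm_eq {a : ℕ} {U : Fin a → Finset V}
    (hdisj : ∀ i j, i ≠ j → Disjoint (U i) (U j)) {f : Fin a → V}
    {π : Equiv.Perm (Fin a)} (hπ : ∀ i, f (π i) ∈ U i) :
    chiForm U f = ((Equiv.Perm.sign π : ℤ) : ℝ) := by
  have h : ∃ π' : Equiv.Perm (Fin a), ∀ i, f (π' i) ∈ U i := ⟨π, hπ⟩
  simp only [chiForm]
  rw [dif_pos h, perm_unique hdisj h.choose_spec hπ]

private lemma chiForm_not {a : ℕ} {U : Fin a → Finset V} {f : Fin a → V}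
    (h : ¬ ∃ π : Equiv.Perm (Fin a), ∀ i, f (π i) ∈ U i) :
    chiForm U f = 0 := by
  simp only [chiForm]
  exact dif_neg h

private lemma chiForm_eq_det {a : ℕ} (U : Fin a → Finset V)
    (hdisj : ∀ i j, i ≠ j → Disjoint (U i) (U j)) (f : Fin a → V) :
    chiForm U f = Matrix.det (Matrix.of fun i j => if f j ∈ U i then (1 : ℝ) else 0) := by
  rw [Matrix.det_apply]
  have hb : ∀ σ : Equiv.Perm (Fin a),
      (∏ i, (Matrix.of fun i j => if f j ∈ U i then (1 : ℝ) else 0) (σ i) i)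
        = if ∀ i, f i ∈ U (σ i) then (1 : ℝ) else 0 := by
    intro σ
    simp only [Matrix.of_apply]
    by_cases hcond : ∀ i, f i ∈ U (σ i)
    · rw [if_pos hcond]
      exact Finset.prod_eq_one fun i _ => if_pos (hcond i)
    · rw [if_neg hcond]
      push_neg at hcond
      obtain ⟨i, hi⟩ := hcond
      exact Finset.prod_eq_zero (Finset.mem_univ i) (if_neg hi)
  by_cases h : ∃ π : Equiv.Perm (Fin a), ∀ i, f (π i) ∈ U i
  · obtain ⟨π, hπ⟩ := h
    rw [chiForm_eq hdisj hπ, Finset.sum_eq_single π⁻¹]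
    · rw [hb, if_pos, Equiv.Perm.sign_inv]
      · simp [Units.smul_def]
      · intro i
        simpa using hπ (π⁻¹ i)
    · intro σ _ hσ
      rw [hb, if_neg, smul_zero]
      intro hc
      apply hσ
      have hcc : ∀ i, f (σ⁻¹ i) ∈ U i := fun i => by simpa using hc (σ⁻¹ i)
      have := perm_unique hdisj hcc hπ
      rw [← this, inv_inv]
    · intro h; exact absurd (Finset.mem_univ _) h
  · rw [chiForm_not h]
    refine (Finset.sum_eq_zero fun σ _ => ?_).symm
    rw [hb, if_neg, smul_zero]
    intro hc
    exact h ⟨σ⁻¹, fun i => by simpa using hc (σ⁻¹ i)⟩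

private lemma chiForm_sq {a : ℕ} (U : Fin a → Finset V)
    (hdisj : ∀ i j, i ≠ j → Disjoint (U i) (U j)) (f : Fin a → V) :
    chiForm U f * chiForm U f
      = ∑ π : Equiv.Perm (Fin a), (if ∀ i, f (π i) ∈ U i then (1 : ℝ) else 0) := by
  by_cases h : ∃ π : Equiv.Perm (Fin a), ∀ i, f (π i) ∈ U i
  · obtain ⟨π, hπ⟩ := h
    rw [chiForm_eq hdisj hπ, Finset.sum_eq_single π, if_pos hπ]
    · rcases Int.units_eq_one_or (Equiv.Perm.sign π) with hs | hs <;> rw [hs] <;> norm_num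
    · intro σ _ hσ
      exact if_neg fun hc => hσ (perm_unique hdisj hc hπ)
    · intro h; exact absurd (Finset.mem_univ _) h
  · rw [chiForm_not h, mul_zero]
    exact (Finset.sum_eq_zero fun σ _ => if_neg fun hc => h ⟨σ, hc⟩).symm

private lemma image_comp_perm {a : ℕ} (f : Fin a → V) (π : Equiv.Perm (Fin a)) :
    Finset.image (f ∘ π) Finset.univ = Finset.image f Finset.univ := by
  ext v
  simp only [Finset.mem_image, Finset.mem_univ, true_and, Function.comp_apply]
  exact ⟨fun ⟨x, hx⟩ => ⟨π x, hx⟩, fun ⟨x, hx⟩ => ⟨π.symm x, by simpa using hx⟩⟩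

private lemma osimp_comp (X : Finset (Finset V)) {a : ℕ} (f : Fin a → V)
    (π : Equiv.Perm (Fin a)) : OSimp X (f ∘ π) ↔ OSimp X f := by
  unfold OSimp
  rw [image_comp_perm, Equiv.injective_comp]

private lemma formIP_chi {a : ℕ} (X : Finset (Finset V)) (m : Finset V → ℝ)
    (U : Fin a → Finset V) (hdisj : ∀ i j, i ≠ j → Disjoint (U i) (U j)) :
    formIP X m (chiForm U) (chiForm U) = mSets X m U := by
  have hfac : ((Nat.factorial a : ℕ) : ℝ) ≠ 0 :=
    Nat.cast_ne_zero.mpr (Nat.factorial_ne_zero a)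
  simp only [formIP]
  calc
    (∑ f : Fin a → V, if OSimp X f then
        m (Finset.image f Finset.univ) / (Nat.factorial a : ℝ) * (chiForm U f * chiForm U f)
      else 0)
      = ∑ f : Fin a → V, ∑ π : Equiv.Perm (Fin a),
          (if OSimp X f ∧ ∀ i, f (π i) ∈ U i then
            m (Finset.image f Finset.univ) / (Nat.factorial a : ℝ) else 0) := by
        refine Finset.sum_congr rfl fun f _ => ?_
        by_cases hf : OSimp X f
        · rw [if_pos hf, chiForm_sq U hdisj f, Finset.mul_sum]
          refine Finset.sum_congr rfl fun π _ => ?_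
          by_cases hπ : ∀ i, f (π i) ∈ U i
          · simp [hπ, hf]
          · simp [hπ]
        · simp [hf]
    _ = ∑ π : Equiv.Perm (Fin a), ∑ f : Fin a → V,
          (if OSimp X f ∧ ∀ i, f (π i) ∈ U i then
            m (Finset.image f Finset.univ) / (Nat.factorial a : ℝ) else 0) :=
        Finset.sum_comm
    _ = ∑ _π : Equiv.Perm (Fin a), ∑ g : Fin a → V,
          (if OSimp X g ∧ ∀ i, g i ∈ U i then
            m (Finset.image g Finset.univ) / (Nat.factorial a : ℝ) else 0) := by
        refine Finset.sum_congr rfl fun π _ => ?_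
        refine Fintype.sum_equiv (Equiv.arrowCongr π.symm (Equiv.refl V)) _ _ fun f => ?_
        have he : (Equiv.arrowCongr π.symm (Equiv.refl V)) f = f ∘ π :=
          funext fun x => by simp [Equiv.arrowCongr]
        rw [he, image_comp_perm]
        refine if_congr ?_ rfl rfl
        exact and_congr (osimp_comp X f π).symm Iff.rfl
    _ = (Fintype.card (Equiv.Perm (Fin a))) • ∑ g : Fin a → V,
          (if OSimp X g ∧ ∀ i, g i ∈ U i then
            m (Finset.image g Finset.univ) / (Nat.factorial a : ℝ) else 0) := by
        rw [Finset.sum_const, Finset.card_univ]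
    _ = mSets X m U := by
        rw [Fintype.card_perm, Fintype.card_fin, nsmul_eq_mul, Finset.mul_sum]
        simp only [mSets]
        refine Finset.sum_congr rfl fun g _ => ?_
        split_ifs with h
        · field_simp
        · rw [mul_zero]

end AuxLemmas

/-- Let `X` be a pure `n`-dimensional weighted simplicial complex,
`0 ≤ k ≤ n-1`, and `U_0,…,U_k` pairwise disjoint vertex sets with indicator `k`-form
`χ = χ_{U_0,…,U_k}`.  Then `‖χ‖² = m(U_0,…,U_k)` when all `U_i` are nonempty (and `0` if some
`U_i` is empty); `dχ = (-1)^{k+1} χ_{U_0,…,U_{k+1}}` where `U_{k+1} = X^{(0)} ∖ (U_0 ∪ … ∪ U_k)`;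
and consequently `‖dχ‖² = m(U_0,…,U_{k+1})` when all of `U_0,…,U_{k+1}` are nonempty. -/
theorem stmt16 {V : Type*} [Fintype V] [DecidableEq V] (n : ℕ)
    (X : Finset (Finset V)) (hSC : IsSC X) (hpure : IsPure X n)
    (m : Finset V → ℝ) (hm : IsWeight X n m)
    (k : ℕ) (hk : k + 1 ≤ n)
    (U : Fin (k + 1) → Finset V)
    (hdisj : ∀ i j, i ≠ j → Disjoint (U i) (U j))
    (U' : Fin (k + 2) → Finset V)
    (hU' : U' = Fin.snoc U (vertsOf X \ Finset.univ.sup U)) :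
    ((∀ i, (U i).Nonempty) →
        formIP X m (chiForm U) (chiForm U) = mSets X m U) ∧
    ((∃ i, U i = ∅) → formIP X m (chiForm U) (chiForm U) = 0) ∧
    (∀ f : Fin (k + 2) → V, OSimp X f →
        dOp (chiForm U) f = (-1 : ℝ) ^ (k + 1) * chiForm U' f) ∧
    ((∀ i, (U' i).Nonempty) →
        formIP X m (dOp (chiForm U)) (dOp (chiForm U)) = mSets X m U') := by
  subst hU'
  set W : Finset V := vertsOf X \ Finset.univ.sup U with hW
  have hWd : ∀ i : Fin (k + 1), Disjoint (U i) W := by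
    intro i
    rw [hW]
    exact Disjoint.mono_left (Finset.le_sup (Finset.mem_univ i)) Finset.disjoint_sdiff
  have hdisj' : ∀ i j : Fin (k + 2), i ≠ j →
      Disjoint ((Fin.snoc U W : Fin (k + 2) → Finset V) i) ((Fin.snoc U W : Fin (k + 2) → Finset V) j) := by
    intro i j
    induction i using Fin.lastCases with
    | last =>
      induction j using Fin.lastCases with
      | last => intro h; exact absurd rfl h
      | cast j =>
        intro _
        simp only [Fin.snoc_last, Fin.snoc_castSucc]
        exact (hWd j).symm
    | cast i =>
      induction j using Fin.lastCases with
      | last =>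
        intro _
        simp only [Fin.snoc_last, Fin.snoc_castSucc]
        exact hWd i
      | cast j =>
        intro hij
        simp only [Fin.snoc_castSucc]
        exact hdisj i j fun h => hij (by rw [h])
  have part3 : ∀ f : Fin (k + 2) → V, OSimp X f →
      dOp (chiForm U) f = (-1 : ℝ) ^ (k + 1) * chiForm (Fin.snoc U W) f := by
    intro f hf
    have hdet' := chiForm_eq_det (Fin.snoc U W) hdisj' f
    set M : Matrix (Fin (k + 2)) (Fin (k + 2)) ℝ :=
      Matrix.of fun i j => if f j ∈ (Fin.snoc U W : Fin (k + 2) → Finset V) i then (1 : ℝ) else 0 with hM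
    have hvert : ∀ j, f j ∈ vertsOf X := by
      intro j
      have h1 : ({f j} : Finset V) ⊆ Finset.image f Finset.univ :=
        Finset.singleton_subset_iff.mpr (Finset.mem_image_of_mem f (Finset.mem_univ j))
      have h2 := hSC _ hf.2 _ h1
      simp [vertsOf, h2]
    have hones : (fun _ : Fin (k + 2) => (1 : ℝ))
        = M (Fin.last (k + 1)) + ∑ i : Fin (k + 1), M (Fin.castSucc i) := by
      funext j
      have hMl : M (Fin.last (k + 1)) j = if f j ∈ W then (1 : ℝ) else 0 := by
        simp [hM, Fin.snoc_last]
      have hMc : ∀ i : Fin (k + 1),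
          M (Fin.castSucc i) j = if f j ∈ U i then (1 : ℝ) else 0 := by
        intro i; simp [hM, Fin.snoc_castSucc]
      rw [Pi.add_apply, Finset.sum_apply, hMl, Finset.sum_congr rfl fun i _ => hMc i]
      by_cases hj : ∃ i, f j ∈ U i
      · obtain ⟨i₀, hi₀⟩ := hj
        rw [Finset.sum_eq_single i₀, if_pos hi₀, if_neg, zero_add]
        · intro hmem
          rw [hW] at hmem
          exact (Finset.mem_sdiff.mp hmem).2
            (Finset.mem_sup.mpr ⟨i₀, Finset.mem_univ _, hi₀⟩)
        · intro b _ hb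
          exact if_neg fun hmem => (Finset.disjoint_left.mp (hdisj b i₀ hb) hmem) hi₀
        · intro h; exact absurd (Finset.mem_univ _) h
      · push_neg at hj
        rw [Finset.sum_eq_zero fun i _ => if_neg (hj i), add_zero, if_pos]
        rw [hW]
        refine Finset.mem_sdiff.mpr ⟨hvert j, fun hmem => ?_⟩
        obtain ⟨i, -, hi⟩ := Finset.mem_sup.mp hmem
        exact hj i hi
    set M1 : Matrix (Fin (k + 2)) (Fin (k + 2)) ℝ :=
      Matrix.updateRow M (Fin.last (k + 1)) (fun _ => 1) with hM1
    have hdetM1 : M1.det = M.det := by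
      have hz : Matrix.det (Matrix.updateRow M (Fin.last (k + 1))
          (∑ i : Fin (k + 1), M (Fin.castSucc i))) = 0 := by
        have hne : ∀ i : Fin (k + 1), Fin.castSucc i ≠ Fin.last (k + 1) :=
          fun i => (Fin.castSucc_lt_last i).ne
        have hc : (∑ i : Fin (k + 1), M (Fin.castSucc i))
            = ∑ r : Fin (k + 2),
                (fun r => if r = Fin.last (k + 1) then (0 : ℝ) else 1) r • M r := by
          conv_rhs => rw [Fin.sum_univ_castSucc]
          simp [hne]
        rw [hc, Matrix.det_updateRow_sum]
        simp
      rw [hM1, hones, Matrix.det_updateRow_add, Matrix.updateRow_eq_self, hz, add_zero]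
    have hexp : M1.det = ∑ p : Fin (k + 2),
        (-1 : ℝ) ^ ((k + 1) + (p : ℕ)) *
          Matrix.det (Matrix.of fun (i : Fin (k + 1)) (q : Fin (k + 1)) =>
            if f (p.succAbove q) ∈ U i then (1 : ℝ) else 0) := by
      rw [Matrix.det_succ_row M1 (Fin.last (k + 1))]
      refine Finset.sum_congr rfl fun p _ => ?_
      have h1 : M1 (Fin.last (k + 1)) p = 1 := by rw [hM1, Matrix.updateRow_self]
      have h2 : (M1.submatrix (Fin.last (k + 1)).succAbove p.succAbove)
          = Matrix.of fun (i : Fin (k + 1)) (q : Fin (k + 1)) =>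
              if f (p.succAbove q) ∈ U i then (1 : ℝ) else 0 := by
        ext i q
        rw [Matrix.submatrix_apply, Fin.succAbove_last, hM1,
          Matrix.updateRow_ne ((Fin.castSucc_lt_last i).ne)]
        simp [hM, Fin.snoc_castSucc]
      rw [h1, h2, mul_one, Fin.val_last]
    have hd : dOp (chiForm U) f = ∑ p : Fin (k + 2), (-1 : ℝ) ^ (p : ℕ) *
        Matrix.det (Matrix.of fun (i : Fin (k + 1)) (q : Fin (k + 1)) =>
          if f (p.succAbove q) ∈ U i then (1 : ℝ) else 0) := by
      simp only [dOp]
      refine Finset.sum_congr rfl fun p _ => ?_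
      rw [chiForm_eq_det U hdisj]
    have hsgn : ∀ (x : ℝ) (p : ℕ),
        (-1 : ℝ) ^ p * x = (-1 : ℝ) ^ (k + 1) * ((-1 : ℝ) ^ ((k + 1) + p) * x) := by
      intro x p
      rw [← mul_assoc, ← pow_add,
        show (k + 1) + ((k + 1) + p) = 2 * (k + 1) + p by ring, pow_add, pow_mul]
      norm_num
    rw [hd, hdet', ← hdetM1, hexp, Finset.mul_sum]
    exact Finset.sum_congr rfl fun p _ => hsgn _ _
  refine ⟨fun _ => formIP_chi X m U hdisj, ?_, part3, fun _ => ?_⟩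
  · rintro ⟨i, hi⟩
    rw [formIP_chi X m U hdisj]
    simp only [mSets]
    refine Finset.sum_eq_zero fun f _ => ?_
    refine if_neg ?_
    rintro ⟨-, hall⟩
    have := hall i
    rw [hi] at this
    exact absurd this (Finset.notMem_empty _)
  · have h4 : formIP X m (dOp (chiForm U)) (dOp (chiForm U))
        = formIP X m (chiForm (Fin.snoc U W)) (chiForm (Fin.snoc U W)) := by
      simp only [formIP]
      refine Finset.sum_congr rfl fun f _ => ?_
      by_cases hf : OSimp X f
      · rw [if_pos hf, if_pos hf, part3 f hf]
        have hsq : ((-1 : ℝ) ^ (k + 1)) * ((-1 : ℝ) ^ (k + 1)) = 1 := by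
          rw [← pow_add, show (k + 1) + (k + 1) = 2 * (k + 1) by ring, pow_mul]
          norm_num
        rw [mul_mul_mul_comm, hsq, one_mul]
      · rw [if_neg hf, if_neg hf]
    rw [h4, formIP_chi X m (Fin.snoc U W) hdisj']
end

section
/- Let X be a pure n-dimensional weighted, (n+1)-partite simplicial complex with sides S_0, …, S_n, with all links of dimension > 0 connected. Then each function φ_i defined by φ_i(u) = n for u ∈ S_i and φ_i(u) = -1 otherwise is an eigenfunction of the upper 0-Laplacian Δ_0^+ with eigenvalue (n+1)/n. -/
open Finset

open scoped Classical

/-!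
Iterating the weight condition gives `m s = k! * ∑ m T` over the faces `T ⊇ s` with `k` more
vertices. A top face has exactly one vertex in each side, so double counting pairs (vertex of
`S_j`, top face) shows that the edges from a face `s` into a side `S_j` it misses carry total
weight `m s / (n + 1 - |s|)`. For a vertex `u` all edges at `u` carry weight `m u`, those into
`S_i` carry `m u / n` if `u ∉ S_i` and nothing if `u ∈ S_i`, and `Δ⁺ φ_i (u)` is then a direct
computation.
-/

open scoped Nat

section

variable {V : Type*} [Fintype V] [DecidableEq V] {X : Finset (Finset V)} {n : ℕ}
  {m : Finset V → ℝ} {s : Finset V}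

theorem sum_linkVerts_insert {β : Type*} [AddCommMonoid β] (g : Finset V → β) :
    ∑ v ∈ linkVerts X s, g (insert v s) =
      ∑ t ∈ X.filter (fun t => s ⊆ t ∧ t.card = s.card + 1), g t := by
  refine sum_bij (fun v _ => insert v s) ?_ ?_ ?_ (fun _ _ => rfl)
  · intro v hv
    simp only [linkVerts, mem_filter, mem_univ, true_and] at hv
    simp [hv.2, subset_insert, card_insert_of_notMem hv.1]
  · intro a ha b _ hab
    simp only [linkVerts, mem_filter, mem_univ, true_and] at ha
    exact (insert_inj ha.1).mp hab
  · intro t ht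
    simp only [mem_filter] at ht
    obtain ⟨v, hv, rfl⟩ := exists_eq_insert_iff.mpr ⟨ht.2.1, ht.2.2.symm⟩
    exact ⟨v, by simp [linkVerts, hv, ht.1], rfl⟩

theorem IsWeight.eq_sum_linkVerts (hm : IsWeight X n m) (hs : s ∈ X) (hcard : s.card ≤ n) :
    m s = ∑ v ∈ linkVerts X s, m (insert v s) := by
  rw [sum_linkVerts_insert, ← hm.2 s hs hcard]

theorem sum_linkVerts_filter_sum_supersets {β : Type*} [AddCommMonoid β] (hX : IsSC X)
    (p : V → Prop) [DecidablePred p] (Q : Finset V → Prop) [DecidablePred Q]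
    (f : Finset V → β) :
    ∑ v ∈ (linkVerts X s).filter p, ∑ T ∈ X.filter (fun T => insert v s ⊆ T ∧ Q T), f T =
      ∑ T ∈ X.filter (fun T => s ⊆ T ∧ Q T), ((T \ s).filter p).card • f T := by
  simp_rw [← sum_const]
  refine sum_comm' fun v T => ?_
  simp only [linkVerts, mem_filter, mem_univ, true_and, mem_sdiff, insert_subset_iff]
  constructor
  · rintro ⟨⟨⟨hvs, -⟩, hp⟩, hT, ⟨hvT, hsT⟩, hQ⟩
    exact ⟨⟨⟨hvT, hvs⟩, hp⟩, hT, hsT, hQ⟩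
  · rintro ⟨⟨⟨hvT, hvs⟩, hp⟩, hT, hsT, hQ⟩
    exact ⟨⟨⟨hvs, hX T hT _ (insert_subset hvT hsT)⟩, hp⟩, hT, ⟨hvT, hsT⟩, hQ⟩

theorem IsWeight.eq_factorial_mul_sum (hX : IsSC X) (hm : IsWeight X n m) (k : ℕ) :
    ∀ s ∈ X, s.card + k ≤ n + 1 →
      m s = k ! * ∑ T ∈ X.filter (fun T => s ⊆ T ∧ T.card = s.card + k), m T := by
  induction k with
  | zero =>
    intro s hs _
    have hself : X.filter (fun T => s ⊆ T ∧ T.card = s.card) = {s} := by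
      ext T
      simp only [mem_filter, mem_singleton]
      constructor
      · rintro ⟨-, hsT, hcard⟩
        exact (eq_of_subset_of_card_le hsT hcard.le).symm
      · rintro rfl
        exact ⟨hs, subset_rfl, rfl⟩
    simp [hself]
  | succ k ih =>
    intro s hs hcard
    have hext : ∀ v ∈ linkVerts X s, m (insert v s) =
        k ! * ∑ T ∈ X.filter (fun T => insert v s ⊆ T ∧ T.card = s.card + (k + 1)), m T := by
      intro v hv
      simp only [linkVerts, mem_filter, mem_univ, true_and] at hv
      have hcv : (insert v s).card = s.card + 1 := card_insert_of_notMem hv.1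
      rw [ih _ hv.2 (by omega), hcv, add_assoc, add_comm 1 k]
    have hcount : ∀ T ∈ X.filter (fun T => s ⊆ T ∧ T.card = s.card + (k + 1)),
        ((T \ s).filter (fun _ => True)).card • m T = (k + 1) * m T := by
      intro T hT
      simp only [mem_filter] at hT
      rw [filter_true, card_sdiff_of_subset hT.2.1, hT.2.2, Nat.add_sub_cancel_left, nsmul_eq_mul,
        Nat.cast_succ]
    rw [hm.eq_sum_linkVerts hs (by omega), ← filter_true (linkVerts X s),
      sum_congr rfl fun v hv => hext v (mem_filter.mp hv).1, ← mul_sum,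
      sum_linkVerts_filter_sum_supersets hX, sum_congr rfl hcount, ← mul_sum, Nat.factorial_succ]
    push_cast
    ring

end

structure IsPartite {V ι : Type*} [DecidableEq V] (X : Finset (Finset V)) (S : ι → Finset V) :
    Prop where
  disjoint : ∀ i j, i ≠ j → Disjoint (S i) (S j)
  cover : ∀ v : V, {v} ∈ X → ∃ i, v ∈ S i
  edge : ∀ u v : V, u ≠ v → {u, v} ∈ X → ∃ i j, i ≠ j ∧ u ∈ S i ∧ v ∈ S j

namespace IsPartite

variable {V ι : Type*} [DecidableEq V] {X : Finset (Finset V)} {S : ι → Finset V}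

theorem eq_of_mem_of_mem (hS : IsPartite X S) {v : V} {i j : ι} (hi : v ∈ S i) (hj : v ∈ S j) :
    i = j := by
  by_contra hij
  exact disjoint_left.mp (hS.disjoint i j hij) hi hj

theorem notMem_of_edge (hS : IsPartite X S) {u v : V} {i : ι} (hu : u ∈ S i) (huv : u ≠ v)
    (he : {u, v} ∈ X) : v ∉ S i := by
  intro hv
  obtain ⟨a, b, hab, ha, hb⟩ := hS.edge u v huv he
  exact hab ((hS.eq_of_mem_of_mem ha hu).trans (hS.eq_of_mem_of_mem hv hb))

theorem card_filter_mem_le_one (hX : IsSC X) (hS : IsPartite X S) {T : Finset V} (hT : T ∈ X)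
    (i : ι) : (T.filter (· ∈ S i)).card ≤ 1 := by
  refine card_le_one.mpr fun a ha b hb => ?_
  simp only [mem_filter] at ha hb
  by_contra hab
  exact hS.notMem_of_edge ha.2 hab (hX T hT _ (insert_subset ha.1 (singleton_subset_iff.mpr hb.1)))
    hb.2

theorem card_filter_mem_eq_one [Fintype ι] (hX : IsSC X) (hS : IsPartite X S) {T : Finset V}
    (hT : T ∈ X) (hcard : T.card = Fintype.card ι) (i : ι) : (T.filter (· ∈ S i)).card = 1 := by
  have hcover : T ⊆ T.filter (· ∈ S i) ∪ (univ.erase i).biUnion fun j => T.filter (· ∈ S j) := by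
    intro v hv
    obtain ⟨j, hj⟩ := hS.cover v (hX T hT _ (singleton_subset_iff.mpr hv))
    by_cases hji : j = i
    · subst hji
      exact mem_union_left _ (mem_filter.mpr ⟨hv, hj⟩)
    · exact mem_union_right _ (mem_biUnion.mpr ⟨j, mem_erase.mpr ⟨hji, mem_univ j⟩,
        mem_filter.mpr ⟨hv, hj⟩⟩)
  have hrest : ((univ.erase i).biUnion fun j => T.filter (· ∈ S j)).card ≤ Fintype.card ι - 1 :=
    calc _ ≤ ∑ j ∈ univ.erase i, (T.filter (· ∈ S j)).card := card_biUnion_le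
      _ ≤ ∑ j ∈ univ.erase i, 1 := sum_le_sum fun j _ => hS.card_filter_mem_le_one hX hT j
      _ = Fintype.card ι - 1 := by simp [card_erase_of_mem]
  have hpos : 0 < Fintype.card ι := Fintype.card_pos_iff.mpr ⟨i⟩
  have := (card_le_card hcover).trans (card_union_le _ _)
  have := hS.card_filter_mem_le_one hX hT i
  omega

end IsPartite

theorem IsWeight.eq_mul_sum_linkVerts_filter_mem {V ι : Type*} [Fintype V] [DecidableEq V]
    [Fintype ι] {X : Finset (Finset V)} {n : ℕ} {m : Finset V → ℝ} {S : ι → Finset V}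
    (hX : IsSC X) (hm : IsWeight X n m) (hS : IsPartite X S) (hι : Fintype.card ι = n + 1)
    {s : Finset V} (hs : s ∈ X) (hcard : s.card ≤ n) {j : ι} (hsj : Disjoint s (S j)) :
    m s = ((n + 1 - s.card : ℕ) : ℝ) *
      ∑ v ∈ (linkVerts X s).filter (· ∈ S j), m (insert v s) := by
  obtain ⟨k, hk⟩ : ∃ k, n + 1 - s.card = k + 1 := ⟨n - s.card, by omega⟩
  have hext : ∀ v ∈ linkVerts X s, m (insert v s) =
      k ! * ∑ T ∈ X.filter (fun T => insert v s ⊆ T ∧ T.card = s.card + (k + 1)), m T := by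
    intro v hv
    simp only [linkVerts, mem_filter, mem_univ, true_and] at hv
    have hcv : (insert v s).card = s.card + 1 := card_insert_of_notMem hv.1
    rw [hm.eq_factorial_mul_sum hX k _ hv.2 (by omega), hcv, add_assoc, add_comm 1 k]
  -- every top face through `s` has exactly one vertex in `S j`, and it lies outside `s`
  have hcount : ∀ T ∈ X.filter (fun T => s ⊆ T ∧ T.card = s.card + (k + 1)),
      ((T \ s).filter (· ∈ S j)).card • m T = m T := by
    intro T hT
    simp only [mem_filter] at hT
    have hsdiff : (T \ s).filter (· ∈ S j) = T.filter (· ∈ S j) := by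
      ext v
      simp only [mem_filter, mem_sdiff]
      exact ⟨fun h => ⟨h.1.1, h.2⟩, fun h => ⟨⟨h.1, fun hv => disjoint_left.mp hsj hv h.2⟩, h.2⟩⟩
    rw [hsdiff, hS.card_filter_mem_eq_one hX hT.1 (by omega) j, one_smul]
  rw [sum_congr rfl fun v hv => hext v (mem_filter.mp hv).1, ← mul_sum,
    sum_linkVerts_filter_sum_supersets hX, sum_congr rfl hcount,
    hm.eq_factorial_mul_sum hX (k + 1) s hs (by omega), hk, Nat.factorial_succ]
  push_cast
  ring

theorem stmt17_general {V : Type*} [Fintype V] [DecidableEq V] (n : ℕ) (hn : 1 ≤ n)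
    (X : Finset (Finset V)) (hSC : IsSC X)
    (m : Finset V → ℝ) (hm : IsWeight X n m)
    (S : Fin (n + 1) → Finset V)
    (hdisj : ∀ i j, i ≠ j → Disjoint (S i) (S j))
    (hcover : ∀ v : V, {v} ∈ X → ∃ i, v ∈ S i)
    (hpartite : ∀ u v : V, u ≠ v → {u, v} ∈ X →
      ∃ i j, i ≠ j ∧ u ∈ S i ∧ v ∈ S j) :
    ∀ i : Fin (n + 1), ∀ u : V, {u} ∈ X →
      linkLap X m ∅ (fun x => if x ∈ S i then (n : ℝ) else -1) u =
        ((n : ℝ) + 1) / n * (if u ∈ S i then (n : ℝ) else -1) := by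
  intro i u hu
  have hS : IsPartite X S := ⟨hdisj, hcover, hpartite⟩
  have hmu : m {u} ≠ 0 := (hm.1 {u} hu).ne'
  have hn0 : (n : ℝ) ≠ 0 := Nat.cast_ne_zero.mpr (by omega)
  set N := linkVerts X {u}
  set w : ℝ := ∑ v ∈ N.filter (· ∈ S i), m (insert v {u})
  have htotal : ∑ v ∈ N, m (insert v {u}) = m {u} :=
    (hm.eq_sum_linkVerts hu (by simpa using hn)).symm
  have hside : w = if u ∈ S i then 0 else m {u} / n := by
    split_ifs with hui
    · refine sum_eq_zero fun v hv => absurd (mem_filter.mp hv).2 ?_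
      simp only [N, linkVerts, mem_filter, mem_univ, true_and, mem_singleton] at hv
      exact hS.notMem_of_edge hui (Ne.symm hv.1.1) (by rw [pair_comm]; exact hv.1.2)
    · rw [eq_div_iff hn0, hm.eq_mul_sum_linkVerts_filter_mem hSC hS (Fintype.card_fin _) hu
        (by simpa using hn) (disjoint_singleton_left.mpr hui)]
      simp [w, N, mul_comm]
  have hsplit : ∑ v ∈ N, m (insert v {u}) * (if v ∈ S i then (n : ℝ) else -1) =
      (n + 1) * w - m {u} := by
    simp only [mul_ite, mul_neg, mul_one, sum_ite, sum_neg_distrib, ← sum_mul]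
    rw [← htotal, ← sum_filter_add_sum_filter_not N (· ∈ S i) (fun v => m (insert v {u}))]
    ring
  have hlap : linkLap X m ∅ (fun x => if x ∈ S i then (n : ℝ) else -1) u =
      (if u ∈ S i then (n : ℝ) else -1) - ((n + 1) * w - m {u}) / m {u} := by
    simp only [linkLap, insert_empty_eq, div_mul_eq_mul_div, ← sum_div]
    rw [← hsplit]
    rfl
  rw [hlap]
  split_ifs at hside ⊢ <;> rw [hside] <;> field_simp <;> ring

/-- Let `X` be a pure `n`-dimensional weighted `(n+1)`-partite simplicial
complex with sides `S_0,…,S_n`, with all links of dimension `> 0` connected.  Then each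
function `φ_i` (equal to `n` on `S_i` and `-1` elsewhere) is an eigenfunction of the upper
`0`-Laplacian `Δ₀⁺` (the `0`-Laplacian of the link of `∅`) with eigenvalue `(n+1)/n`. -/
theorem stmt17 {V : Type*} [Fintype V] [DecidableEq V] (n : ℕ) (hn : 1 ≤ n)
    (X : Finset (Finset V)) (hSC : IsSC X) (hpure : IsPure X n)
    (hconn : ∀ s ∈ X, s.card + 1 ≤ n → linkConn X s)
    (m : Finset V → ℝ) (hm : IsWeight X n m)
    (S : Fin (n + 1) → Finset V)
    (hdisj : ∀ i j, i ≠ j → Disjoint (S i) (S j))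
    (hcover : ∀ v : V, {v} ∈ X → ∃ i, v ∈ S i)
    (hpartite : ∀ u v : V, u ≠ v → {u, v} ∈ X →
      ∃ i j, i ≠ j ∧ u ∈ S i ∧ v ∈ S j) :
    ∀ i : Fin (n + 1), ∀ u : V, {u} ∈ X →
      linkLap X m ∅ (fun x => if x ∈ S i then (n : ℝ) else -1) u =
        ((n : ℝ) + 1) / n * (if u ∈ S i then (n : ℝ) else -1) :=
  stmt17_general n hn X hSC m hm S hdisj hcover hpartite
end

section
/- Let X be an (n+1)-partite pure n-dimensional weighted simplicial complex with sides S_0,…,S_n. For any φ ∈ C^0(X,ℝ) and 0 ≤ i ≤ n, define φ_{i}(u) = -n·φ(u) for u ∈ S_i and φ_{i}(u) = φ(u) otherwise. Then Σ_{i=0}^n ‖φ_{i}‖² = (n²+n)‖φ‖², and Σ_{i=0}^n ⟨φ_{i}, Δ_0^+ φ_{i}⟩ = ⟨φ, ((n+1)² I - (n+1) Δ_0^+) φ⟩. -/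
/-! Write `φ_i = c_i φ` with `c_i(u) = 1 - (n+1)[u ∈ S_i]`. Since every vertex lies in exactly
one side, `Σ_i c_i(u) c_i(v) = (n+1)²[u, v on the same side] - (n+1)`. Hence
`Σ_i φ_i(u)² = (n²+n) φ(u)²`, and, the Laplacian only coupling vertices of different sides,
`Σ_i φ_i(u) φ_i(v) = -(n+1) φ(u) φ(v)` along each of its terms. Both identities therefore hold
vertex by vertex, for arbitrary weights. -/

open Finset

open scoped Classical

/-- The inner product on `0`-forms: `⟨φ,ψ⟩ = Σ_{v ∈ X^{(0)}} m(v) φ(v) ψ(v)`. -/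
noncomputable def vertIP {V : Type*} [Fintype V] [DecidableEq V] (X : Finset (Finset V))
    (m : Finset V → ℝ) (φ ψ : V → ℝ) : ℝ :=
  ∑ v : V, if {v} ∈ X then m {v} * (φ v * ψ v) else 0

open Function

namespace Partite

variable {V : Type*} {n : ℕ} {S : Fin (n + 1) → Finset V} {u v : V} {j k : Fin (n + 1)}

theorem mem_iff_eq_of_pairwise_disjoint (hS : Pairwise (Disjoint on S)) (hu : u ∈ S j)
    (i : Fin (n + 1)) : u ∈ S i ↔ i = j :=
  ⟨fun hi => by_contra fun hij => Finset.disjoint_left.mp (hS hij) hi hu, fun h => h ▸ hu⟩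

variable [DecidableEq V]

def sideScale (S : Fin (n + 1) → Finset V) (i : Fin (n + 1)) (u : V) : ℝ :=
  if u ∈ S i then -(n : ℝ) else 1

theorem sideScale_eq_of_mem (hS : Pairwise (Disjoint on S)) (hu : u ∈ S j) (i : Fin (n + 1)) :
    sideScale S i u = 1 - ((n : ℝ) + 1) * if i = j then 1 else 0 := by
  simp only [sideScale, mem_iff_eq_of_pairwise_disjoint hS hu]
  split_ifs <;> ring

theorem sum_sideScale_mul_sideScale (hS : Pairwise (Disjoint on S)) (hu : u ∈ S j)
    (hv : v ∈ S k) :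
    ∑ i, sideScale S i u * sideScale S i v =
      (if j = k then ((n : ℝ) + 1) ^ 2 else 0) - (n + 1) := by
  simp only [sideScale_eq_of_mem hS hu, sideScale_eq_of_mem hS hv]
  simp [mul_sub, sub_mul, Finset.sum_sub_distrib, eq_comm, sq]

theorem sum_sideScale_sq (hS : Pairwise (Disjoint on S)) (hu : u ∈ S j) :
    ∑ i, sideScale S i u * sideScale S i u = (n : ℝ) ^ 2 + n := by
  rw [sum_sideScale_mul_sideScale hS hu hu, if_pos rfl]
  ring

theorem sum_sideScale_mul_sideScale_of_ne (hS : Pairwise (Disjoint on S)) (hu : u ∈ S j)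
    (hv : v ∈ S k) (hjk : j ≠ k) :
    ∑ i, sideScale S i u * sideScale S i v = -((n : ℝ) + 1) := by
  rw [sum_sideScale_mul_sideScale hS hu hv, if_neg hjk, zero_sub]

/-- The value at `u` of the second identity, for any operator `ψ ↦ ψ(u) - Σ_{v ∈ N} w(v) ψ(v)`
whose support `N` avoids the side of `u`. -/
theorem sum_sideScale_mul_sub_sum (hS : Pairwise (Disjoint on S)) (hu : u ∈ S j)
    (N : Finset V) (hN : ∀ v ∈ N, ∃ k ≠ j, v ∈ S k) (w φ : V → ℝ) :
    ∑ i, sideScale S i u * φ u *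
        (sideScale S i u * φ u - ∑ v ∈ N, w v * (sideScale S i v * φ v)) =
      φ u * (((n : ℝ) + 1) ^ 2 * φ u - (n + 1) * (φ u - ∑ v ∈ N, w v * φ v)) := by
  have hcross : ∀ v ∈ N, ∑ i, sideScale S i u * φ u * (w v * (sideScale S i v * φ v)) =
      -((n : ℝ) + 1) * (φ u * (w v * φ v)) := by
    intro v hv
    obtain ⟨k, hkj, hvk⟩ := hN v hv
    rw [← sum_sideScale_mul_sideScale_of_ne hS hu hvk hkj.symm, Finset.sum_mul]
    exact Finset.sum_congr rfl fun i _ => by ring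
  have hsq : ∑ i, sideScale S i u * φ u * (sideScale S i u * φ u) =
      ((n : ℝ) ^ 2 + n) * (φ u * φ u) := by
    rw [← sum_sideScale_sq hS hu, Finset.sum_mul]
    exact Finset.sum_congr rfl fun i _ => by ring
  conv_lhs => simp only [mul_sub, Finset.sum_sub_distrib, Finset.mul_sum]
  rw [hsq, Finset.sum_comm, Finset.sum_congr rfl hcross, ← Finset.mul_sum, ← Finset.mul_sum]
  ring

end Partite

section vertIP

variable {V : Type*} [Fintype V] [DecidableEq V] (X : Finset (Finset V)) (m : Finset V → ℝ)

theorem vertIP_const_mul_left (c : ℝ) (φ ψ : V → ℝ) :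
    vertIP X m (fun v => c * φ v) ψ = c * vertIP X m φ ψ := by
  rw [vertIP, vertIP, Finset.mul_sum]
  refine Finset.sum_congr rfl fun v _ => ?_
  split_ifs <;> ring

theorem sum_vertIP_eq_vertIP {ι : Type*} [Fintype ι] (f g : ι → V → ℝ) (a b : V → ℝ)
    (h : ∀ v, {v} ∈ X → ∑ i, f i v * g i v = a v * b v) :
    ∑ i, vertIP X m (f i) (g i) = vertIP X m a b := by
  unfold vertIP
  rw [Finset.sum_comm]
  refine Finset.sum_congr rfl fun v _ => ?_
  by_cases hv : {v} ∈ X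
  · simp only [if_pos hv, ← Finset.mul_sum, h v hv]
  · simp only [if_neg hv, Finset.sum_const_zero]

end vertIP

theorem stmt19_general {V : Type*} [Fintype V] [DecidableEq V] (n : ℕ)
    (X : Finset (Finset V))
    (m : Finset V → ℝ)
    (S : Fin (n + 1) → Finset V)
    (hdisj : ∀ i j, i ≠ j → Disjoint (S i) (S j))
    (hcover : ∀ v : V, {v} ∈ X → ∃ i, v ∈ S i)
    (hpartite : ∀ u v : V, u ≠ v → {u, v} ∈ X →
      ∃ i j, i ≠ j ∧ u ∈ S i ∧ v ∈ S j)
    (φ : V → ℝ) (φi : Fin (n + 1) → V → ℝ)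
    (hφi : ∀ i u, φi i u = if u ∈ S i then -(n : ℝ) * φ u else φ u) :
    (∑ i : Fin (n + 1), vertIP X m (φi i) (φi i) =
        ((n : ℝ) ^ 2 + n) * vertIP X m φ φ) ∧
    (∑ i : Fin (n + 1), vertIP X m (φi i) (linkLap X m ∅ (φi i)) =
        vertIP X m φ
          (fun u => ((n : ℝ) + 1) ^ 2 * φ u - ((n : ℝ) + 1) * linkLap X m ∅ φ u)) := by
  have hS : Pairwise (Disjoint on S) := fun i j h => hdisj i j h
  obtain rfl : φi = fun i u => Partite.sideScale S i u * φ u := by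
    funext i u
    rw [hφi, Partite.sideScale]
    split_ifs <;> ring
  constructor
  · rw [← vertIP_const_mul_left]
    refine sum_vertIP_eq_vertIP X m _ _ _ _ fun u hu => ?_
    obtain ⟨j, hj⟩ := hcover u hu
    rw [mul_assoc, ← Partite.sum_sideScale_sq hS hj, Finset.sum_mul]
    exact Finset.sum_congr rfl fun i _ => by ring
  · refine sum_vertIP_eq_vertIP X m _ _ _ _ fun u hu => ?_
    obtain ⟨j, hj⟩ := hcover u hu
    have hnbr : ∀ v ∈ Finset.univ.filter
        (fun v => v ∉ insert u (∅ : Finset V) ∧ insert v (insert u ∅) ∈ X), ∃ k ≠ j, v ∈ S k := by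
      intro v hv
      obtain ⟨hvu, hedge⟩ := (Finset.mem_filter.mp hv).2
      rw [insert_empty_eq, Finset.mem_singleton] at hvu
      rw [insert_empty_eq, Finset.pair_comm] at hedge
      obtain ⟨i, k, hik, hui, hvk⟩ := hpartite u v (Ne.symm hvu) hedge
      rw [Partite.mem_iff_eq_of_pairwise_disjoint hS hj] at hui
      exact ⟨k, hui ▸ hik.symm, hvk⟩
    exact Partite.sum_sideScale_mul_sub_sum hS hj _ hnbr _ φ

/-- Let `X` be an `(n+1)`-partite pure `n`-dimensional weighted simplicial
complex with sides `S_0,…,S_n`.  For `φ ∈ C⁰(X,ℝ)` define `φ_i` by multiplying `φ` by `-n` on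
`S_i` and leaving it unchanged elsewhere.  Then `Σ_i ‖φ_i‖² = (n²+n)‖φ‖²` and
`Σ_i ⟨φ_i, Δ₀⁺φ_i⟩ = ⟨φ, ((n+1)² I - (n+1) Δ₀⁺) φ⟩`. -/
theorem stmt19 {V : Type*} [Fintype V] [DecidableEq V] (n : ℕ) (hn : 1 ≤ n)
    (X : Finset (Finset V)) (hSC : IsSC X) (hpure : IsPure X n)
    (m : Finset V → ℝ) (hm : IsWeight X n m)
    (S : Fin (n + 1) → Finset V)
    (hdisj : ∀ i j, i ≠ j → Disjoint (S i) (S j))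
    (hcover : ∀ v : V, {v} ∈ X → ∃ i, v ∈ S i)
    (hpartite : ∀ u v : V, u ≠ v → {u, v} ∈ X →
      ∃ i j, i ≠ j ∧ u ∈ S i ∧ v ∈ S j)
    (φ : V → ℝ) (φi : Fin (n + 1) → V → ℝ)
    (hφi : ∀ i u, φi i u = if u ∈ S i then -(n : ℝ) * φ u else φ u) :
    (∑ i : Fin (n + 1), vertIP X m (φi i) (φi i) =
        ((n : ℝ) ^ 2 + n) * vertIP X m φ φ) ∧
    (∑ i : Fin (n + 1), vertIP X m (φi i) (linkLap X m ∅ (φi i)) =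
        vertIP X m φ
          (fun u => ((n : ℝ) + 1) ^ 2 * φ u - ((n : ℝ) + 1) * linkLap X m ∅ φ u)) :=
  stmt19_general n X m S hdisj hcover hpartite φ φi hφi
end
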